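/- arXiv:1011.3471 — 3 statements merged into one kernel-verified Lean document; each statement's English description precedes it below -/
import Mathlib

section
/- The cyclic dual of any para-cocyclic k-module is a para-cyclic k-module. That is, given a para-cocyclic module (C^•, δ_•, σ_•, τ_•), setting C_n := C^n, d_i := σ_{n-(i+1)} for 0 ≤ i < n, d_n := σ_{n-1} ∘ τ_n, s_i := δ_{n-(i+1)} for 0 ≤ i < n, and t_n := τ_n yields maps satisfying all para-cyclic relations (simplicial identities plus the compatibility of t with faces and degeneracies). -/
/-!
Under the reindexing `i ↦ n - i` every simplicial identity of the cyclic dual is one of the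
cosimplicial identities read backwards, and every relation between `t` and the `d_i`, `s_i`
with `i ≤ n` is a relation between `τ` and the `σ_j`, `δ_j`. The extra face
`d_{n+1} = σ_n ∘ τ_{n+1}` is handled by moving `τ` across the codegeneracies and cofaces;
`τ_n ∘ σ_0 = σ_n ∘ τ_{n+1}²` is what makes `d_{n+1} ∘ d_{n+2} = d_{n+1} ∘ d_{n+1}` and
`d_i ∘ t = t ∘ d_{i-1}` hold at `i = n + 1`, and `τ_{n+1} ∘ δ_0 = δ_{n+1}` gives
`d_{n+2} ∘ s_{n+1} = id` and `s_0 ∘ t = t² ∘ s_n`.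
-/

open Classical in
/-- The faces of the cyclic dual: `d n i : C (n+1) → C n` is `σ_{n-i}` for `i ≤ n`
and `σ_n ∘ τ_{n+1}` for `i = n+1`. -/
noncomputable def dualFace {k : Type*} [CommRing k] {C : ℕ → Type*}
    [∀ n, AddCommGroup (C n)] [∀ n, Module k (C n)]
    (σ : ∀ n : ℕ, ℕ → (C (n + 1) →ₗ[k] C n))
    (τ : ∀ n : ℕ, C n →ₗ[k] C n) (n i : ℕ) : C (n + 1) →ₗ[k] C n :=
  if i = n + 1 then (σ n n).comp (τ (n + 1)) else σ n (n - i)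

/-- The degeneracies of the cyclic dual: `s n i : C n → C (n+1)` is `δ_{n-i}` for `i ≤ n`. -/
noncomputable def dualDegen {k : Type*} [CommRing k] {C : ℕ → Type*}
    [∀ n, AddCommGroup (C n)] [∀ n, Module k (C n)]
    (δ : ∀ n : ℕ, ℕ → (C n →ₗ[k] C (n + 1))) (n i : ℕ) : C n →ₗ[k] C (n + 1) :=
  δ n (n - i)

section CyclicDual

variable {k : Type*} [CommRing k] {C : ℕ → Type*}
  [∀ n, AddCommGroup (C n)] [∀ n, Module k (C n)]
  {δ : ∀ n : ℕ, ℕ → (C n →ₗ[k] C (n + 1))}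
  {σ : ∀ n : ℕ, ℕ → (C (n + 1) →ₗ[k] C n)}
  {τ : ∀ n : ℕ, C n →ₗ[k] C n}

open LinearMap

theorem dualFace_of_le {n i : ℕ} (hi : i ≤ n) : dualFace σ τ n i = σ n (n - i) :=
  if_neg (by omega)

theorem dualFace_last (n : ℕ) : dualFace σ τ n (n + 1) = (σ n n).comp (τ (n + 1)) :=
  if_pos rfl

theorem dualFace_comp_dualFace_of_le
    (hσσ : ∀ n i j, i ≤ j → j ≤ n →
      (σ n j).comp (σ (n + 1) i) = (σ n i).comp (σ (n + 1) (j + 1)))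
    {n i j : ℕ} (hij : i < j) (hj : j ≤ n + 1) :
    (dualFace σ τ n i).comp (dualFace σ τ (n + 1) j) =
      (dualFace σ τ n (j - 1)).comp (dualFace σ τ (n + 1) i) := by
  rw [dualFace_of_le (by omega), dualFace_of_le hj, dualFace_of_le (by omega),
    dualFace_of_le (by omega)]
  convert hσσ n (n + 1 - j) (n - i) (by omega) (by omega) using 3 <;> omega

theorem dualFace_comp_dualFace_last
    (hσσ : ∀ n i j, i ≤ j → j ≤ n →
      (σ n j).comp (σ (n + 1) i) = (σ n i).comp (σ (n + 1) (j + 1)))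
    (hτσ : ∀ n i, 1 ≤ i → i ≤ n →
      (τ n).comp (σ n i) = (σ n (i - 1)).comp (τ (n + 1)))
    {n i : ℕ} (hi : i ≤ n) :
    (dualFace σ τ n i).comp (dualFace σ τ (n + 1) (n + 2)) =
      (dualFace σ τ n (n + 1)).comp (dualFace σ τ (n + 1) i) := by
  have hτ := hτσ (n + 1) (n + 1 - i) (by omega) (by omega)
  rw [show n + 1 - i - 1 = n - i by omega] at hτ
  rw [dualFace_last (n + 1), dualFace_last, dualFace_of_le hi, dualFace_of_le (by omega)]
  calc (σ n (n - i)).comp ((σ (n + 1) (n + 1)).comp (τ (n + 2)))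
      = (σ n n).comp ((σ (n + 1) (n - i)).comp (τ (n + 2))) := by
        rw [← comp_assoc, ← hσσ n _ n (by omega) le_rfl, comp_assoc]
    _ = ((σ n n).comp (τ (n + 1))).comp (σ (n + 1) (n + 1 - i)) := by
        rw [← hτ, comp_assoc]

theorem dualFace_last_comp_dualFace_last
    (hσσ : ∀ n i j, i ≤ j → j ≤ n →
      (σ n j).comp (σ (n + 1) i) = (σ n i).comp (σ (n + 1) (j + 1)))
    (hτσ : ∀ n i, 1 ≤ i → i ≤ n →
      (τ n).comp (σ n i) = (σ n (i - 1)).comp (τ (n + 1)))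
    (hτσ₀ : ∀ n, (τ n).comp (σ n 0) = (σ n n).comp ((τ (n + 1)).comp (τ (n + 1))))
    (n : ℕ) :
    (dualFace σ τ n (n + 1)).comp (dualFace σ τ (n + 1) (n + 2)) =
      (dualFace σ τ n (n + 1)).comp (dualFace σ τ (n + 1) (n + 1)) := by
  have hτ := hτσ (n + 1) (n + 1) (by omega) le_rfl
  rw [Nat.add_sub_cancel] at hτ
  rw [dualFace_last (n + 1), dualFace_of_le (n := n + 1) le_rfl, Nat.sub_self, dualFace_last]
  calc ((σ n n).comp (τ (n + 1))).comp ((σ (n + 1) (n + 1)).comp (τ (n + 2)))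
      = ((σ n n).comp (σ (n + 1) n)).comp ((τ (n + 2)).comp (τ (n + 2))) := by
        rw [comp_assoc, ← comp_assoc (τ (n + 2)) (σ (n + 1) (n + 1)), hτ]
        simp only [comp_assoc]
    _ = ((σ n n).comp (τ (n + 1))).comp (σ (n + 1) 0) := by
        rw [hσσ n n n le_rfl le_rfl, comp_assoc, ← hτσ₀, comp_assoc]

theorem dualFace_comp_dualFace
    (hσσ : ∀ n i j, i ≤ j → j ≤ n →
      (σ n j).comp (σ (n + 1) i) = (σ n i).comp (σ (n + 1) (j + 1)))
    (hτσ : ∀ n i, 1 ≤ i → i ≤ n →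
      (τ n).comp (σ n i) = (σ n (i - 1)).comp (τ (n + 1)))
    (hτσ₀ : ∀ n, (τ n).comp (σ n 0) = (σ n n).comp ((τ (n + 1)).comp (τ (n + 1))))
    {n i j : ℕ} (hij : i < j) (hj : j ≤ n + 2) :
    (dualFace σ τ n i).comp (dualFace σ τ (n + 1) j) =
      (dualFace σ τ n (j - 1)).comp (dualFace σ τ (n + 1) i) := by
  obtain hj | rfl := Nat.lt_or_eq_of_le hj
  · exact dualFace_comp_dualFace_of_le hσσ hij (by omega)
  obtain hi | rfl := Nat.lt_or_eq_of_le (Nat.le_of_lt_succ hij)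
  · exact dualFace_comp_dualFace_last hσσ hτσ (by omega)
  · exact dualFace_last_comp_dualFace_last hσσ hτσ hτσ₀ n

theorem dualDegen_comp_dualDegen
    (hδδ : ∀ n i j, i < j → j ≤ n + 2 →
      (δ (n + 1) j).comp (δ n i) = (δ (n + 1) i).comp (δ n (j - 1)))
    {n i j : ℕ} (hij : i ≤ j) (hj : j ≤ n) :
    (dualDegen δ (n + 1) i).comp (dualDegen δ n j) =
      (dualDegen δ (n + 1) (j + 1)).comp (dualDegen δ n i) := by
  unfold dualDegen
  convert hδδ n (n - j) (n + 1 - i) (by omega) (by omega) using 3 <;> omega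

theorem dualFace_comp_dualDegen_of_lt
    (hσδ₁ : ∀ n i j, i < j → j ≤ n + 1 →
      (σ (n + 1) j).comp (δ (n + 1) i) = (δ n i).comp (σ n (j - 1)))
    {n i j : ℕ} (hij : i < j) (hj : j ≤ n + 1) :
    (dualFace σ τ (n + 1) i).comp (dualDegen δ (n + 1) j) =
      (dualDegen δ n (j - 1)).comp (dualFace σ τ n i) := by
  rw [dualFace_of_le (by omega), dualFace_of_le (by omega), dualDegen, dualDegen]
  convert hσδ₁ n (n + 1 - j) (n + 1 - i) (by omega) (by omega) using 3 <;> omega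

theorem dualFace_comp_dualDegen_self
    (hσδ₂ : ∀ n j, j ≤ n →
      (σ n j).comp (δ n j) = LinearMap.id ∧ (σ n j).comp (δ n (j + 1)) = LinearMap.id)
    {n j : ℕ} (hj : j ≤ n + 1) :
    (dualFace σ τ (n + 1) j).comp (dualDegen δ (n + 1) j) = LinearMap.id := by
  rw [dualFace_of_le hj]
  exact (hσδ₂ (n + 1) (n + 1 - j) (by omega)).1

theorem dualFace_succ_comp_dualDegen
    (hσδ₂ : ∀ n j, j ≤ n →
      (σ n j).comp (δ n j) = LinearMap.id ∧ (σ n j).comp (δ n (j + 1)) = LinearMap.id)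
    (hτδ₀ : ∀ n, (τ (n + 1)).comp (δ n 0) = δ n (n + 1))
    {n j : ℕ} (hj : j ≤ n + 1) :
    (dualFace σ τ (n + 1) (j + 1)).comp (dualDegen δ (n + 1) j) = LinearMap.id := by
  obtain hj | rfl := Nat.lt_or_eq_of_le hj
  · rw [dualFace_of_le hj, dualDegen]
    convert (hσδ₂ (n + 1) (n - j) (by omega)).2 using 3 <;> omega
  · rw [dualFace_last, dualDegen, Nat.sub_self, comp_assoc, hτδ₀]
    exact (hσδ₂ (n + 1) (n + 1) le_rfl).2

theorem dualFace_comp_dualDegen_of_succ_lt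
    (hσδ₁ : ∀ n i j, i < j → j ≤ n + 1 →
      (σ (n + 1) j).comp (δ (n + 1) i) = (δ n i).comp (σ n (j - 1)))
    (hσδ₃ : ∀ n i j, j + 1 < i → i ≤ n + 2 →
      (σ (n + 1) j).comp (δ (n + 1) i) = (δ n (i - 1)).comp (σ n j))
    (hτδ : ∀ n i, 1 ≤ i → i ≤ n + 1 →
      (τ (n + 1)).comp (δ n i) = (δ n (i - 1)).comp (τ n))
    {n i j : ℕ} (hji : j + 1 < i) (hi : i ≤ n + 2) :
    (dualFace σ τ (n + 1) i).comp (dualDegen δ (n + 1) j) =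
      (dualDegen δ n j).comp (dualFace σ τ n (i - 1)) := by
  obtain hi | rfl := Nat.lt_or_eq_of_le hi
  · rw [dualFace_of_le (by omega), dualFace_of_le (by omega), dualDegen, dualDegen]
    convert hσδ₃ n (n + 1 - j) (n + 1 - i) (by omega) (by omega) using 3 <;> omega
  · have hτ := hτδ (n + 1) (n + 1 - j) (by omega) (by omega)
    have hσ := hσδ₁ n (n - j) (n + 1) (by omega) le_rfl
    rw [show n + 1 - j - 1 = n - j by omega] at hτ
    rw [Nat.add_sub_cancel] at hσ
    rw [dualFace_last (n + 1), show n + 2 - 1 = n + 1 from rfl, dualFace_last, dualDegen,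
      dualDegen]
    calc ((σ (n + 1) (n + 1)).comp (τ (n + 2))).comp (δ (n + 1) (n + 1 - j))
        = ((σ (n + 1) (n + 1)).comp (δ (n + 1) (n - j))).comp (τ (n + 1)) := by
          rw [comp_assoc, hτ, comp_assoc]
      _ = (δ n (n - j)).comp ((σ n n).comp (τ (n + 1))) := by
          rw [hσ, comp_assoc]

theorem dualFace_comp_tau
    (hτσ : ∀ n i, 1 ≤ i → i ≤ n →
      (τ n).comp (σ n i) = (σ n (i - 1)).comp (τ (n + 1)))
    (hτσ₀ : ∀ n, (τ n).comp (σ n 0) = (σ n n).comp ((τ (n + 1)).comp (τ (n + 1))))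
    {n i : ℕ} (hi₁ : 1 ≤ i) (hi : i ≤ n + 1) :
    (dualFace σ τ n i).comp (τ (n + 1)) = (τ n).comp (dualFace σ τ n (i - 1)) := by
  obtain hi | rfl := Nat.lt_or_eq_of_le hi
  · rw [dualFace_of_le (by omega), dualFace_of_le (by omega)]
    convert (hτσ n (n + 1 - i) (by omega) (by omega)).symm using 3 <;> omega
  · rw [dualFace_last, Nat.add_sub_cancel, dualFace_of_le le_rfl, Nat.sub_self, comp_assoc,
      hτσ₀]

theorem dualDegen_comp_tau
    (hτδ : ∀ n i, 1 ≤ i → i ≤ n + 1 →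
      (τ (n + 1)).comp (δ n i) = (δ n (i - 1)).comp (τ n))
    {n i : ℕ} (hi₁ : 1 ≤ i) (hi : i ≤ n) :
    (dualDegen δ n i).comp (τ n) = (τ (n + 1)).comp (dualDegen δ n (i - 1)) := by
  unfold dualDegen
  convert (hτδ n (n + 1 - i) (by omega) (by omega)).symm using 3 <;> omega

theorem dualDegen_zero_comp_tau
    (hτδ : ∀ n i, 1 ≤ i → i ≤ n + 1 →
      (τ (n + 1)).comp (δ n i) = (δ n (i - 1)).comp (τ n))
    (hτδ₀ : ∀ n, (τ (n + 1)).comp (δ n 0) = δ n (n + 1)) (n : ℕ) :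
    (dualDegen δ n 0).comp (τ n) = ((τ (n + 1)).comp (τ (n + 1))).comp (dualDegen δ n n) := by
  have hτ := hτδ n (n + 1) (by omega) le_rfl
  rw [Nat.add_sub_cancel] at hτ
  rw [dualDegen, dualDegen, Nat.sub_zero, Nat.sub_self, comp_assoc, hτδ₀, hτ]

end CyclicDual

theorem cyclicDual_is_paraCyclic
    (k : Type*) [CommRing k]
    (C : ℕ → Type*) [∀ n, AddCommGroup (C n)] [∀ n, Module k (C n)]
    (δ : ∀ n : ℕ, ℕ → (C n →ₗ[k] C (n + 1)))
    (σ : ∀ n : ℕ, ℕ → (C (n + 1) →ₗ[k] C n))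
    (τ : ∀ n : ℕ, C n →ₗ[k] C n)
    -- cosimplicial identities
    (hδδ : ∀ n i j, i < j → j ≤ n + 2 →
      (δ (n + 1) j).comp (δ n i) = (δ (n + 1) i).comp (δ n (j - 1)))
    (hσσ : ∀ n i j, i ≤ j → j ≤ n →
      (σ n j).comp (σ (n + 1) i) = (σ n i).comp (σ (n + 1) (j + 1)))
    (hσδ₁ : ∀ n i j, i < j → j ≤ n + 1 →
      (σ (n + 1) j).comp (δ (n + 1) i) = (δ n i).comp (σ n (j - 1)))
    (hσδ₂ : ∀ n j, j ≤ n →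
      (σ n j).comp (δ n j) = LinearMap.id ∧
      (σ n j).comp (δ n (j + 1)) = LinearMap.id)
    (hσδ₃ : ∀ n i j, j + 1 < i → i ≤ n + 2 →
      (σ (n + 1) j).comp (δ (n + 1) i) = (δ n (i - 1)).comp (σ n j))
    -- para-cocyclic identities
    (hτδ : ∀ n i, 1 ≤ i → i ≤ n + 1 →
      (τ (n + 1)).comp (δ n i) = (δ n (i - 1)).comp (τ n))
    (hτδ₀ : ∀ n, (τ (n + 1)).comp (δ n 0) = δ n (n + 1))
    (hτσ : ∀ n i, 1 ≤ i → i ≤ n →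
      (τ n).comp (σ n i) = (σ n (i - 1)).comp (τ (n + 1)))
    (hτσ₀ : ∀ n, (τ n).comp (σ n 0) = (σ n n).comp ((τ (n + 1)).comp (τ (n + 1)))) :
    -- conclusion: the cyclic dual is a para-cyclic module
    -- (1) simplicial face relations
    (∀ n i j, i < j → j ≤ n + 2 →
      (dualFace σ τ n i).comp (dualFace σ τ (n + 1) j) =
        (dualFace σ τ n (j - 1)).comp (dualFace σ τ (n + 1) i)) ∧
    -- (2) simplicial degeneracy relations
    (∀ n i j, i ≤ j → j ≤ n →
      (dualDegen δ (n + 1) i).comp (dualDegen δ n j) =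
        (dualDegen δ (n + 1) (j + 1)).comp (dualDegen δ n i)) ∧
    -- (3) mixed relations
    (∀ n i j, i < j → j ≤ n + 1 →
      (dualFace σ τ (n + 1) i).comp (dualDegen δ (n + 1) j) =
        (dualDegen δ n (j - 1)).comp (dualFace σ τ n i)) ∧
    (∀ n j, j ≤ n + 1 →
      (dualFace σ τ (n + 1) j).comp (dualDegen δ (n + 1) j) = LinearMap.id ∧
      (dualFace σ τ (n + 1) (j + 1)).comp (dualDegen δ (n + 1) j) = LinearMap.id) ∧
    (∀ n i j, j + 1 < i → i ≤ n + 2 →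
      (dualFace σ τ (n + 1) i).comp (dualDegen δ (n + 1) j) =
        (dualDegen δ n j).comp (dualFace σ τ n (i - 1))) ∧
    -- (4) compatibility of `t := τ` with faces
    (∀ n i, 1 ≤ i → i ≤ n + 1 →
      (dualFace σ τ n i).comp (τ (n + 1)) = (τ n).comp (dualFace σ τ n (i - 1))) ∧
    (∀ n, (dualFace σ τ n 0).comp (τ (n + 1)) = dualFace σ τ n (n + 1)) ∧
    -- (5) compatibility of `t := τ` with degeneracies
    (∀ n i, 1 ≤ i → i ≤ n →
      (dualDegen δ n i).comp (τ n) = (τ (n + 1)).comp (dualDegen δ n (i - 1))) ∧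
    (∀ n, (dualDegen δ n 0).comp (τ n) =
      ((τ (n + 1)).comp (τ (n + 1))).comp (dualDegen δ n n)) := by
  refine ⟨fun _ _ _ => dualFace_comp_dualFace hσσ hτσ hτσ₀,
    fun _ _ _ => dualDegen_comp_dualDegen hδδ,
    fun _ _ _ => dualFace_comp_dualDegen_of_lt hσδ₁,
    fun _ _ hj => ⟨dualFace_comp_dualDegen_self hσδ₂ hj,
      dualFace_succ_comp_dualDegen hσδ₂ hτδ₀ hj⟩,
    fun _ _ _ => dualFace_comp_dualDegen_of_succ_lt hσδ₁ hσδ₃ hτδ,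
    fun _ _ => dualFace_comp_tau hτσ hτσ₀,
    fun n => ?_,
    fun _ _ => dualDegen_comp_tau hτδ,
    dualDegen_zero_comp_tau hτδ hτδ₀⟩
  rw [dualFace_of_le n.zero_le, Nat.sub_zero, dualFace_last]
end

section
/- Let g be a Lie algebra over a field k of characteristic 0. The antisymmetrization map Ξ : M ⊗ Λ^n g → U(g)^{⊗n} ⊗ M, sending m ⊗ X_1 ∧ ⋯ ∧ X_n to (1/n!) Σ_{σ ∈ S_n} sgn(σ) X_{σ(1)} ⊗ ⋯ ⊗ X_{σ(n)} ⊗ m, is injective and lands in the kernel of the Hochschild-type coboundary b of the cocyclic module C^•(U(g), M) with trivial coaction; in particular Ξ identifies M ⊗ Λ^• g with the degree-wise cohomology H^•(U(g), M) of the cosimplicial module when M is flat. -/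
/-!
STATEMENT 17: Let `g` be a Lie algebra over a field `k` of characteristic `0`, and
`U = U(g)` its universal enveloping algebra (with its canonical coproduct, for which the
generators are primitive, and counit).  Let `M` be a right `U`-module, viewed as a left
`U`-comodule via the trivial coaction `m ↦ 1 ⊗ m`.  The antisymmetrisation map
`Ξ : M ⊗ Λⁿg → U^{⊗n} ⊗ M`,
`m ⊗ X₁ ∧ ⋯ ∧ Xₙ ↦ (1/n!) Σ_{σ ∈ Sₙ} sgn(σ) X_{σ(1)} ⊗ ⋯ ⊗ X_{σ(n)} ⊗ m`,
is injective and lands in the kernel of the Hochschild-type coboundary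
`b = Σ (-1)ⁱ δᵢ` of the cocyclic module `C^•(U, M)`; in particular (with `M` flat) it
identifies `M ⊗ Λ^•g` with the degreewise cohomology `H^•(U, M)` of the cosimplicial
module.

Tensor powers are modelled recursively (`UPow 0 = k`, `UPow (n+1) = U ⊗ UPow n`), the
cofaces are `δ₀` (insert `1` in front), `δᵢ` (apply `Δ` in slot `i`, `1 ≤ i ≤ n`), and
`δ_{n+1}` (insert `1` at the end, coming from the trivial coaction), and `Λⁿg` is the
`n`-th exterior power `⋀[k]^n g` of `g`.
-/

open TensorProduct

universe u

variable (k g : Type u) [Field k] [CharZero k] [LieRing g] [LieAlgebra k g]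

/-- `U(g)`. -/
abbrev UEnv := UniversalEnvelopingAlgebra k g

/-- `UPow n ≅ U(g)^{⊗n}` (as an object of `ModuleCat k`). -/
noncomputable def UPow : ℕ → ModuleCat.{u} k
  | 0 => ModuleCat.of k k
  | n + 1 => ModuleCat.of k (UEnv k g ⊗[k] UPow n)

/-- Insert `1` as a new first tensor factor. -/
noncomputable def insFront (n : ℕ) : UPow k g n →ₗ[k] UPow k g (n + 1) :=
  (TensorProduct.mk k (UEnv k g) (UPow k g n) 1 :
    UPow k g n →ₗ[k] UEnv k g ⊗[k] UPow k g n)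

/-- Insert `1` as a new last tensor factor. -/
noncomputable def insBack : ∀ n : ℕ, UPow k g n →ₗ[k] UPow k g (n + 1)
  | 0 => (TensorProduct.mk k (UEnv k g) k 1 : k →ₗ[k] UEnv k g ⊗[k] k)
  | n + 1 => (LinearMap.lTensor (UEnv k g) (insBack n) :
      UEnv k g ⊗[k] UPow k g n →ₗ[k] UEnv k g ⊗[k] UPow k g (n + 1))

variable (Δ : UEnv k g →ₗ[k] UEnv k g ⊗[k] UEnv k g)

/-- Apply the coproduct `Δ` in slot `j` (slots numbered from `0`). -/
noncomputable def comulAt : ∀ n : ℕ, ℕ → (UPow k g n →ₗ[k] UPow k g (n + 1))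
  | 0, _ => (TensorProduct.mk k (UEnv k g) k 1 : k →ₗ[k] UEnv k g ⊗[k] k)
  | n + 1, 0 =>
      ((TensorProduct.assoc k (UEnv k g) (UEnv k g) (UPow k g n)).toLinearMap ∘ₗ
        (LinearMap.rTensor (UPow k g n) Δ :
          UEnv k g ⊗[k] UPow k g n →ₗ[k] (UEnv k g ⊗[k] UEnv k g) ⊗[k] UPow k g n))
  | n + 1, j + 1 =>
      (LinearMap.lTensor (UEnv k g) (comulAt n j) :
        UEnv k g ⊗[k] UPow k g n →ₗ[k] UEnv k g ⊗[k] UPow k g (n + 1))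

variable (M : Type u) [AddCommGroup M] [Module k M]
  [Module (UEnv k g)ᵐᵒᵖ M] [IsScalarTower k (UEnv k g)ᵐᵒᵖ M]

open Classical in
/-- The cofaces of `C^•(U(g), M) = U(g)^{⊗•} ⊗ M` with trivial coaction on `M`:
`δ₀` inserts `1` in front, `δᵢ` applies `Δ` in slot `i` (`1 ≤ i ≤ n`), and `δ_{n+1}`
inserts `1` at the end. -/
noncomputable def coface (n i : ℕ) : UPow k g n ⊗[k] M →ₗ[k] UPow k g (n + 1) ⊗[k] M :=
  if i = 0 then LinearMap.rTensor M (insFront k g n)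
  else if i ≤ n then LinearMap.rTensor M (comulAt k g Δ n (i - 1))
  else LinearMap.rTensor M (insBack k g n)

/-- The Hochschild-type coboundary `b = Σ_{i=0}^{n+1} (-1)ⁱ δᵢ`. -/
noncomputable def bCoboundary (n : ℕ) :
    UPow k g n ⊗[k] M →ₗ[k] UPow k g (n + 1) ⊗[k] M :=
  ∑ i ∈ Finset.range (n + 2), ((-1 : ℤ) ^ i) • coface k g Δ M n i

/-- The elementary tensor `f 0 ⊗ f 1 ⊗ ⋯ ⊗ f (n-1)` in `UPow n`. -/
noncomputable def tpow : ∀ n : ℕ, (Fin n → UEnv k g) → UPow k g n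
  | 0, _ => (1 : k)
  | n + 1, f =>
      (show UEnv k g ⊗[k] UPow k g n from (f 0) ⊗ₜ[k] (tpow n (Fin.tail f)))

/-!
Over a field, `g` has a basis `B` indexed by a well-ordered set, and `g` acts on the polynomial
algebra `S(g)` (modelled as `(ι →₀ ℕ) →₀ R`, a monomial being its exponent vector): `B b`
multiplies a monomial all of whose indices are `≥ b`, and otherwise, `d` being the least index of
the monomial `d m`, `B b · d m = B d · (B b · m) + [B b, B d] · m`. Induction on the degree, using
the Jacobi identity, shows that this is a representation; it is faithful on `g ⊆ S(g)`, so
`ι : g → U(g)` is injective (the PBW argument) and has a linear left inverse `π`. The map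
`u₁ ⊗ ⋯ ⊗ uₙ ⊗ m ↦ m ⊗ π u₁ ∧ ⋯ ∧ π uₙ` sends `Ξ (m ⊗ X₁ ∧ ⋯ ∧ Xₙ)` to `m ⊗ X₁ ∧ ⋯ ∧ Xₙ`, as
each of the `n!` signed terms gives the same wedge; and `M ⊗ Λⁿg → M ⊗ Λg` is injective, so `Ξ`
is injective.

For the cocycle property let `Φₓ (w ⊗ m) = (x ⊗ w) ⊗ m`. For primitive `x` the cofaces satisfy
`δ₀Φₓ = Φ₁Φₓ`, `δ₁Φₓ = ΦₓΦ₁ + Φ₁Φₓ` and `δᵢ₊₂Φₓ = Φₓδᵢ₊₁`, so `b Φₓ = -Φₓ b`. As `b` vanishes in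
degree `0`, it kills `x₁ ⊗ ⋯ ⊗ xₙ ⊗ m` whenever all `xᵢ` are primitive, hence every term of `Ξ`.
-/

namespace UniversalEnvelopingAlgebra

namespace PBW

open Finsupp

section Filtration

variable (R ι : Type*) [CommRing R]

def filtration (t : ℕ) : Submodule R ((ι →₀ ℕ) →₀ R) :=
  supported R R {m | m.degree ≤ t}

variable {R ι}

lemma filtration_le_iff {t : ℕ} {p : Submodule R ((ι →₀ ℕ) →₀ R)} :
    filtration R ι t ≤ p ↔ ∀ m : ι →₀ ℕ, m.degree ≤ t → single m 1 ∈ p := by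
  rw [filtration, supported_eq_span_single, Submodule.span_le, Set.image_subset_iff]
  rfl

lemma single_mem_filtration {t : ℕ} {m : ι →₀ ℕ} (h : m.degree ≤ t) :
    single m (1 : R) ∈ filtration R ι t :=
  filtration_le_iff.1 le_rfl m h

lemma filtration_mono : Monotone (filtration R ι) :=
  fun _ _ h => supported_mono fun _ hm => le_trans hm h

end Filtration

lemma _root_.Finsupp.linearCombination_mem {R M α : Type*} [Semiring R] [AddCommMonoid M]
    [Module R M] {v : α → M} {p : Submodule R M} (h : ∀ a, v a ∈ p) (l : α →₀ R) :
    linearCombination R v l ∈ p :=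
  Submodule.span_le.2 (Set.range_subset_iff.2 h)
    (range_linearCombination R (v := v) ▸ LinearMap.mem_range_self _ l)

lemma map_comm_of_basis {R L V ι : Type*} [CommRing R] [LieRing L] [LieAlgebra R L]
    [AddCommGroup V] [Module R V] [LinearOrder ι] (B : Module.Basis ι R L)
    (ρ : L →ₗ[R] Module.End R V) (v : V)
    (h : ∀ b c, c < b → ρ (B b) (ρ (B c) v) = ρ (B c) (ρ (B b) v) + ρ ⁅B b, B c⁆ v) (x y : L) :
    ρ x (ρ y v) = ρ y (ρ x v) + ρ ⁅x, y⁆ v := by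
  let bracket : L →ₗ[R] L →ₗ[R] L := LinearMap.mk₂ R (⁅·, ·⁆) add_lie smul_lie lie_add lie_smul
  have key : ρ.compl₂ (ρ.flip v) = (ρ.compl₂ (ρ.flip v)).flip + bracket.compr₂ (ρ.flip v) := by
    refine LinearMap.ext_basis B B fun b c => ?_
    rcases lt_trichotomy c b with hcb | rfl | hbc
    · simpa [bracket] using h b c hcb
    · simp [bracket]
    · have hskew : ⁅B b, B c⁆ = -⁅B c, B b⁆ := (lie_skew _ _).symm
      simp only [bracket, LinearMap.compl₂_apply, LinearMap.flip_apply, LinearMap.add_apply,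
        LinearMap.compr₂_apply, LinearMap.mk₂_apply, h c b hbc, hskew, map_neg]
      abel
  simpa [bracket] using congr($key x y)

lemma linearCombination_eqOn_filtration {R M ι : Type*} [CommRing R] [AddCommGroup M]
    [Module R M] {F G : (ι →₀ ℕ) → M} {t : ℕ} (h : ∀ m : ι →₀ ℕ, m.degree ≤ t → F m = G m)
    {v : (ι →₀ ℕ) →₀ R} (hv : v ∈ filtration R ι t) :
    linearCombination R F v = linearCombination R G v := by
  have hle : filtration R ι t ≤ LinearMap.eqLocus (linearCombination R F) (linearCombination R G) :=
    filtration_le_iff.2 fun m hm => by simp [h m hm]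
  exact hle hv

lemma degree_add_single {ι : Type*} (m : ι →₀ ℕ) (b : ι) :
    (m + single b 1).degree = m.degree + 1 := by
  rw [map_add, degree_single]

variable {ι : Type*} [LinearOrder ι]

lemma forall_le_or_exists_eq_add_single (b : ι) (m : ι →₀ ℕ) :
    (∀ a ∈ m.support, b ≤ a) ∨
      ∃ m' d, (∀ a ∈ m'.support, d ≤ a) ∧ d < b ∧ m = m' + single d 1 := by
  by_cases h : ∀ a ∈ m.support, b ≤ a
  · exact .inl h
  push Not at h
  obtain ⟨a, ha, hab⟩ := h
  have hne : m.support.Nonempty := ⟨a, ha⟩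
  set d := m.support.min' hne
  have hd : d ∈ m.support := m.support.min'_mem hne
  refine .inr ⟨m - single d 1, d, fun a ha => ?_, (m.support.min'_le a ha).trans_lt hab, ?_⟩
  · exact m.support.min'_le a (support_tsub ha)
  · ext x
    rcases eq_or_ne x d with rfl | hx
    · have := mem_support_iff.1 hd
      simp only [coe_add, coe_tsub, Pi.add_apply, Pi.sub_apply, single_eq_same]
      omega
    · simp [single_eq_of_ne hx]

lemma forall_le_add_single {d f : ι} {m : ι →₀ ℕ} (hd : ∀ a ∈ m.support, d ≤ a) (hdf : d ≤ f) :
    ∀ a ∈ (m + single f 1).support, d ≤ a := fun a ha => by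
  rcases Finset.mem_union.1 (support_add ha) with ha | ha
  · exact hd a ha
  · rwa [Finset.mem_singleton.1 (support_single_subset ha)]

variable {R L : Type*} [CommRing R] [LieRing L] [LieAlgebra R L] (B : Module.Basis ι R L)

-- The fuel `n` stands in for the recursion on the degree of `m`, which is not structural.
noncomputable def actAux : ℕ → ι → (ι →₀ ℕ) → ((ι →₀ ℕ) →₀ R)
  | 0, b, m => single (m + single b 1) 1
  | n + 1, b, m =>
    if h : ∀ a ∈ m.support, b ≤ a then single (m + single b 1) 1
    else
      let d := m.support.min' (Finset.nonempty_iff_ne_empty.2 fun h' => h (by simp [h']))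
      let m' := m - single d 1
      single (m + single b 1) 1
        + linearCombination R (actAux n d) (actAux n b m' - single (m' + single b 1) 1)
        + linearCombination R (fun a => actAux n a m') (B.repr ⁅B b, B d⁆)

variable {B}

lemma actAux_of_forall_le {b : ι} {m : ι →₀ ℕ} (h : ∀ a ∈ m.support, b ≤ a) (n : ℕ) :
    actAux B n b m = single (m + single b 1) 1 := by
  cases n with
  | zero => rfl
  | succ n => rw [actAux, dif_pos h]

lemma actAux_succ_add_single {b d : ι} {m : ι →₀ ℕ} (hd : ∀ a ∈ m.support, d ≤ a) (hdb : d < b)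
    (n : ℕ) :
    actAux B (n + 1) b (m + single d 1) = single (m + single d 1 + single b 1) 1
      + linearCombination R (actAux B n d) (actAux B n b m - single (m + single b 1) 1)
      + linearCombination R (fun a => actAux B n a m) (B.repr ⁅B b, B d⁆) := by
  have hmem : d ∈ (m + single d 1).support := by simp
  have hmin : (m + single d 1).support.min' ⟨d, hmem⟩ = d := by
    exact le_antisymm (Finset.min'_le _ _ hmem)
      (Finset.le_min' _ _ _ (forall_le_add_single hd le_rfl))
  rw [actAux, dif_neg fun h => (h d hmem).not_gt hdb]
  simp only [hmin, add_tsub_cancel_right]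

lemma actAux_sub_single_mem (n : ℕ) (b : ι) (m : ι →₀ ℕ) :
    actAux B n b m - single (m + single b 1) 1 ∈ filtration R ι m.degree := by
  induction n generalizing b m with
  | zero => simp [actAux]
  | succ n ih =>
    obtain h | ⟨m, d, hd, hdb, rfl⟩ := forall_le_or_exists_eq_add_single b m
    · simp [actAux_of_forall_le h]
    have hact : ∀ a w, actAux B n a w ∈ filtration R ι (w.degree + 1) := fun a w => by
      simpa using add_mem (filtration_mono (Nat.le_succ _) (ih a w))
        (single_mem_filtration (degree_add_single w a).le)
    rw [actAux_succ_add_single hd hdb, add_assoc, add_sub_cancel_left, degree_add_single]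
    refine add_mem ?_ (linearCombination_mem (fun a => hact a m) _)
    have hle : filtration R ι m.degree ≤
        (filtration R ι (m.degree + 1)).comap (linearCombination R (actAux B n d)) :=
      filtration_le_iff.2 fun w hw => by simpa using filtration_mono (by omega) (hact d w)
    exact hle (ih b m)

lemma actAux_succ_eq {n : ℕ} (b : ι) {m : ι →₀ ℕ} (hm : m.degree ≤ n) :
    actAux B (n + 1) b m = actAux B n b m := by
  induction n generalizing b m with
  | zero =>
    have h : ∀ a ∈ m.support, b ≤ a := by simp [(degree_eq_zero_iff m).1 (Nat.le_zero.1 hm)]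
    rw [actAux_of_forall_le h, actAux_of_forall_le h]
  | succ n ih =>
    obtain h | ⟨m, d, hd, hdb, rfl⟩ := forall_le_or_exists_eq_add_single b m
    · rw [actAux_of_forall_le h, actAux_of_forall_le h]
    replace hm : m.degree ≤ n := by rw [degree_add_single] at hm; omega
    rw [actAux_succ_add_single hd hdb, actAux_succ_add_single hd hdb, ih b hm,
      linearCombination_eqOn_filtration (fun w hw => ih d (hw.trans hm))
        (actAux_sub_single_mem n b m)]
    simp only [ih _ hm]

variable (B) in
noncomputable def act (b : ι) (m : ι →₀ ℕ) : (ι →₀ ℕ) →₀ R :=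
  actAux B m.degree b m

lemma actAux_eq_act {n : ℕ} (b : ι) {m : ι →₀ ℕ} (hm : m.degree ≤ n) :
    actAux B n b m = act B b m := by
  induction n, hm using Nat.le_induction with
  | base => rfl
  | succ n hn ih => rw [actAux_succ_eq b hn, ih]

variable (B) in
noncomputable def rep : L →ₗ[R] Module.End R ((ι →₀ ℕ) →₀ R) :=
  B.constr R fun b => linearCombination R (act B b)

lemma rep_apply_single (x : L) (m : ι →₀ ℕ) :
    rep B x (single m 1) = linearCombination R (fun a => act B a m) (B.repr x) := by
  rw [rep, Module.Basis.constr_apply, Finsupp.sum, LinearMap.sum_apply, linearCombination_apply,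
    Finsupp.sum]
  simp

lemma rep_basis_apply_single (b : ι) (m : ι →₀ ℕ) :
    rep B (B b) (single m 1) = act B b m := by
  simp [rep_apply_single]

lemma rep_basis_eq (b : ι) : rep B (B b) = linearCombination R (act B b) :=
  B.constr_basis R _ b

lemma rep_apply_single_of_forall_le {b : ι} {m : ι →₀ ℕ} (h : ∀ a ∈ m.support, b ≤ a) :
    rep B (B b) (single m 1) = single (m + single b 1) 1 := by
  rw [rep_basis_apply_single, act, actAux_of_forall_le h]

lemma rep_apply_single_sub_mem (b : ι) (m : ι →₀ ℕ) :
    rep B (B b) (single m 1) - single (m + single b 1) 1 ∈ filtration R ι m.degree := by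
  rw [rep_basis_apply_single]
  exact actAux_sub_single_mem _ _ _

lemma rep_apply_single_add_single {b d : ι} {m : ι →₀ ℕ} (hd : ∀ a ∈ m.support, d ≤ a)
    (hdb : d < b) :
    rep B (B b) (single (m + single d 1) 1) =
      rep B (B d) (rep B (B b) (single m 1)) + rep B ⁅B b, B d⁆ (single m 1) := by
  have hlead :
      rep B (B d) (single (m + single b 1) 1) = single (m + single d 1 + single b 1) 1 := by
    rw [rep_apply_single_of_forall_le (forall_le_add_single hd hdb.le), add_right_comm]
  have hlow := rep_apply_single_sub_mem (B := B) b m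
  rw [rep_basis_apply_single, act] at hlow
  have hfirst : rep B (B d) (actAux B m.degree b m) =
      linearCombination R (actAux B m.degree d) (actAux B m.degree b m - single (m + single b 1) 1)
        + single (m + single d 1 + single b 1) 1 := by
    rw [← hlead, linearCombination_eqOn_filtration (G := act B d)
      (fun w hw => actAux_eq_act d hw) hlow, ← rep_basis_eq, ← map_add, sub_add_cancel]
  rw [rep_basis_apply_single, act, degree_add_single, actAux_succ_add_single hd hdb,
    rep_apply_single ⁅B b, B d⁆, rep_basis_apply_single b m, act, hfirst]
  simp only [act]
  abel

lemma rep_comm_of_mem_filtration {t : ℕ}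
    (h : ∀ m : ι →₀ ℕ, m.degree ≤ t → ∀ x y : L,
      rep B x (rep B y (single m 1)) = rep B y (rep B x (single m 1)) + rep B ⁅x, y⁆ (single m 1))
    {v : (ι →₀ ℕ) →₀ R} (hv : v ∈ filtration R ι t) (x y : L) :
    rep B x (rep B y v) = rep B y (rep B x v) + rep B ⁅x, y⁆ v := by
  have hle : filtration R ι t ≤
      LinearMap.eqLocus (rep B x ∘ₗ rep B y) (rep B y ∘ₗ rep B x + rep B ⁅x, y⁆) :=
    filtration_le_iff.2 fun m hm => h m hm x y
  exact hle hv

lemma rep_comm_single_of_forall_le {b c : ι} {m : ι →₀ ℕ} (hc : ∀ a ∈ m.support, c ≤ a)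
    (hcb : c < b) :
    rep B (B b) (rep B (B c) (single m 1)) =
      rep B (B c) (rep B (B b) (single m 1)) + rep B ⁅B b, B c⁆ (single m 1) := by
  rw [rep_apply_single_of_forall_le hc, rep_apply_single_add_single hc hcb]

lemma rep_comm_single_add_single {b c d : ι} {m : ι →₀ ℕ} (hd : ∀ a ∈ m.support, d ≤ a)
    (hdc : d < c) (hcb : c < b)
    (ih : ∀ v ∈ filtration R ι m.degree, ∀ x y : L,
      rep B x (rep B y v) = rep B y (rep B x v) + rep B ⁅x, y⁆ v) :
    rep B (B b) (rep B (B c) (single (m + single d 1) 1)) =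
      rep B (B c) (rep B (B b) (single (m + single d 1) 1)) +
        rep B ⁅B b, B c⁆ (single (m + single d 1) 1) := by
  have hz : single m 1 ∈ filtration R ι m.degree := single_mem_filtration le_rfl
  have hdz : single (m + single d 1) (1 : R) = rep B (B d) (single m 1) :=
    (rep_apply_single_of_forall_le hd).symm
  have hE : ∀ e, d < e → rep B (B e) (rep B (B d) (single m 1)) =
      rep B (B d) (rep B (B e) (single m 1)) + rep B ⁅B e, B d⁆ (single m 1) :=
    fun e hde => hdz ▸ rep_apply_single_add_single hd hde
  have hS : ∀ e f, d < e → d < f →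
      rep B (B e) (rep B (B d) (rep B (B f) (single m 1))) =
        rep B (B d) (rep B (B e) (rep B (B f) (single m 1))) +
          rep B ⁅B e, B d⁆ (rep B (B f) (single m 1)) := by
    intro e f hde hdf
    have hmem : rep B (B f) (single m 1) ∈ LinearMap.eqLocus (rep B (B e) ∘ₗ rep B (B d))
        (rep B (B d) ∘ₗ rep B (B e) + rep B ⁅B e, B d⁆) := by
      rw [← sub_add_cancel (rep B (B f) (single m 1)) (single (m + single f 1) 1)]
      exact add_mem (ih _ (rep_apply_single_sub_mem f m) _ _)
        (rep_comm_single_of_forall_le (forall_le_add_single hd hdf.le) hde)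
    exact hmem
  have hjac : ⁅⁅B b, B c⁆, B d⁆ = ⁅⁅B b, B d⁆, B c⁆ + ⁅B b, ⁅B c, B d⁆⁆ := by
    rw [leibniz_lie, ← lie_skew (B c) ⁅B b, B d⁆]
    abel
  have hdb : d < b := hdc.trans hcb
  rw [hdz, hE c hdc, hE b hdb, map_add, map_add, hS b c hdb hdc, hS c b hdc hdb,
    ih _ hz (B b) (B c), ih _ hz (B b) ⁅B c, B d⁆, ih _ hz ⁅B b, B d⁆ (B c),
    ih _ hz ⁅B b, B c⁆ (B d), hjac, map_add, map_add, LinearMap.add_apply]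
  abel

variable (B) in
lemma rep_comm_single (m : ι →₀ ℕ) (x y : L) :
    rep B x (rep B y (single m 1)) =
      rep B y (rep B x (single m 1)) + rep B ⁅x, y⁆ (single m 1) := by
  induction hn : m.degree using Nat.strong_induction_on generalizing m x y with
  | _ n ih =>
    refine map_comm_of_basis B _ _ (fun b c hcb => ?_) x y
    obtain h | ⟨m, d, hd, hdc, rfl⟩ := forall_le_or_exists_eq_add_single c m
    · exact rep_comm_single_of_forall_le h hcb
    refine rep_comm_single_add_single hd hdc hcb fun v hv => rep_comm_of_mem_filtration ?_ hv
    exact fun w hw x y => ih w.degree (by rw [← hn, degree_add_single]; omega) w x y rfl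

lemma rep_apply_single_zero (x : L) :
    rep B x (single 0 1) = (B.repr x).mapDomain fun a => single a 1 := by
  have h : ∀ a, act B a 0 = single (single a 1) 1 := fun a => by
    rw [act, actAux_of_forall_le (by simp), zero_add]
  simp [rep_apply_single, h, linearCombination_apply, mapDomain]

section

attribute [local instance 100] LieRing.ofAssociativeRing

variable (B) in
noncomputable def repHom : L →ₗ⁅R⁆ Module.End R ((ι →₀ ℕ) →₀ R) where
  __ := rep B
  map_lie' {x y} := LinearMap.ext fun v => by
    have h : v ∈ filtration R ι (v.support.sup Finsupp.degree) :=
      (mem_supported R v).2 fun w hw => Finset.le_sup (f := Finsupp.degree) hw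
    simp [LieRing.of_associative_ring_bracket,
      rep_comm_of_mem_filtration (fun m _ => rep_comm_single B m) h x y]

end

end PBW

attribute [local instance 100] LieRing.ofAssociativeRing in
theorem ι_injective {R L : Type*} [CommRing R] [LieRing L] [LieAlgebra R L] [Module.Free R L] :
    Function.Injective (ι R : L → UniversalEnvelopingAlgebra R L) := by
  let B := Module.Free.chooseBasis R L
  let _ : LinearOrder (Module.Free.ChooseBasisIndex R L) := IsWellOrder.linearOrder WellOrderingRel
  refine (injective_iff_map_eq_zero (ι R)).2 fun x hx => B.repr.injective ?_
  have h : PBW.rep B x (Finsupp.single 0 1) = 0 := by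
    have h := congr($(lift_ι_apply R (PBW.repHom B) x) (Finsupp.single 0 1))
    rw [hx, map_zero] at h
    exact h.symm
  rw [PBW.rep_apply_single_zero, ← Finsupp.mapDomain_zero] at h
  simpa using Finsupp.mapDomain_injective (Finsupp.single_left_injective one_ne_zero) h

attribute [local instance 100] LieRing.ofAssociativeRing in
theorem exists_leftInverse_ι {K L : Type*} [Field K] [LieRing L] [LieAlgebra K L] :
    ∃ π : UniversalEnvelopingAlgebra K L →ₗ[K] L, ∀ x, π (ι K x) = x := by
  obtain ⟨π, hπ⟩ := (ι K : L →ₗ⁅K⁆ _).toLinearMap.exists_leftInverse_of_injective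
    (LinearMap.ker_eq_bot.2 ι_injective)
  exact ⟨π, LinearMap.congr_fun hπ⟩

end UniversalEnvelopingAlgebra

section Cocycle

variable {k g M : Type u} [Field k] [LieRing g] [LieAlgebra k g] [AddCommGroup M] [Module k M]
  {Δ : UEnv k g →ₗ[k] UEnv k g ⊗[k] UEnv k g}

variable (k g) in
noncomputable def prepend (x : UEnv k g) (n : ℕ) : UPow k g n →ₗ[k] UPow k g (n + 1) :=
  (TensorProduct.mk k (UEnv k g) (UPow k g n) x : UPow k g n →ₗ[k] UEnv k g ⊗[k] UPow k g n)

lemma tpow_succ (n : ℕ) (f : Fin (n + 1) → UEnv k g) :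
    tpow k g (n + 1) f = prepend k g (f 0) n (tpow k g n (Fin.tail f)) :=
  rfl

lemma coface_zero (n : ℕ) :
    coface k g Δ M n 0 = LinearMap.rTensor M (prepend k g 1 n) := by
  rw [coface, if_pos rfl]
  rfl

lemma comulAt_zero_comp_prepend {x : UEnv k g} (hx : Δ x = x ⊗ₜ 1 + 1 ⊗ₜ x) (n : ℕ) :
    comulAt k g Δ (n + 1) 0 ∘ₗ prepend k g x n =
      prepend k g x (n + 1) ∘ₗ prepend k g 1 n + prepend k g 1 (n + 1) ∘ₗ prepend k g x n := by
  refine LinearMap.ext fun w => ?_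
  show TensorProduct.assoc k _ _ _ (Δ x ⊗ₜ w) = _
  rw [hx, TensorProduct.add_tmul, map_add]
  rfl

lemma coface_one_comp_prepend {x : UEnv k g} (hx : Δ x = x ⊗ₜ 1 + 1 ⊗ₜ x) (n : ℕ) :
    coface k g Δ M (n + 1) 1 ∘ₗ LinearMap.rTensor M (prepend k g x n) =
      LinearMap.rTensor M (prepend k g x (n + 1)) ∘ₗ LinearMap.rTensor M (prepend k g 1 n) +
        LinearMap.rTensor M (prepend k g 1 (n + 1)) ∘ₗ LinearMap.rTensor M (prepend k g x n) := by
  rw [coface, if_neg one_ne_zero, if_pos (Nat.le_add_left 1 n), Nat.sub_self,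
    ← LinearMap.rTensor_comp, comulAt_zero_comp_prepend hx, LinearMap.rTensor_add,
    LinearMap.rTensor_comp, LinearMap.rTensor_comp]

lemma coface_succ_succ_comp_prepend (x : UEnv k g) (n i : ℕ) :
    coface k g Δ M (n + 1) (i + 2) ∘ₗ LinearMap.rTensor M (prepend k g x n) =
      LinearMap.rTensor M (prepend k g x (n + 1)) ∘ₗ coface k g Δ M n (i + 1) := by
  rw [coface, coface, if_neg (Nat.succ_ne_zero _), if_neg (Nat.succ_ne_zero _)]
  by_cases h : i + 1 ≤ n
  · rw [if_pos (by omega), if_pos h, ← LinearMap.rTensor_comp, ← LinearMap.rTensor_comp]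
    exact congrArg _ (LinearMap.ext fun w => rfl)
  · rw [if_neg (by omega), if_neg h, ← LinearMap.rTensor_comp, ← LinearMap.rTensor_comp]
    exact congrArg _ (LinearMap.ext fun w => rfl)

lemma bCoboundary_rTensor_prepend {x : UEnv k g} (hx : Δ x = x ⊗ₜ 1 + 1 ⊗ₜ x) (n : ℕ)
    (t : UPow k g n ⊗[k] M) :
    bCoboundary k g Δ M (n + 1) (LinearMap.rTensor M (prepend k g x n) t) =
      -LinearMap.rTensor M (prepend k g x (n + 1)) (bCoboundary k g Δ M n t) := by
  have h1 := LinearMap.congr_fun (coface_one_comp_prepend (M := M) hx n) t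
  have h2 := fun i => LinearMap.congr_fun (coface_succ_succ_comp_prepend (Δ := Δ) (M := M) x n i) t
  simp only [LinearMap.comp_apply, LinearMap.add_apply] at h1 h2
  rw [bCoboundary, bCoboundary, LinearMap.sum_apply, LinearMap.sum_apply,
    Finset.sum_range_succ' _ (n + 2), Finset.sum_range_succ' _ (n + 1),
    Finset.sum_range_succ' _ (n + 1)]
  simp only [LinearMap.smul_apply, h1, h2]
  simp only [coface_zero, map_add, map_sum, map_zsmul, pow_succ _ (_ + 1), mul_neg_one, neg_smul,
    Finset.sum_neg_distrib, zero_add, pow_zero, pow_one, one_smul]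
  abel

lemma bCoboundary_zero : bCoboundary k g Δ M 0 = 0 := by
  rw [bCoboundary, Finset.sum_range_succ, Finset.sum_range_one, coface, coface, if_pos rfl,
    if_neg one_ne_zero, if_neg (by omega)]
  simp only [pow_zero, one_smul, pow_one, neg_smul]
  exact add_neg_cancel _

lemma bCoboundary_tpow_tmul {n : ℕ} {f : Fin n → UEnv k g}
    (hf : ∀ i, Δ (f i) = f i ⊗ₜ 1 + 1 ⊗ₜ f i) (m : M) :
    bCoboundary k g Δ M n (tpow k g n f ⊗ₜ m) = 0 := by
  induction n with
  | zero => rw [bCoboundary_zero, LinearMap.zero_apply]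
  | succ n ih =>
    rw [tpow_succ, ← LinearMap.rTensor_tmul, bCoboundary_rTensor_prepend (hf 0),
      ih (f := Fin.tail f) fun i => hf i.succ, map_zero, neg_zero]

end Cocycle

section Antisymmetrisation

variable {k g M : Type u} [Field k] [LieRing g] [LieAlgebra k g] [AddCommGroup M] [Module k M]

variable (k M) in
noncomputable def antisymmetrisation (n : ℕ) (m : M) (X : Fin n → g) : UPow k g n ⊗[k] M :=
  ((n.factorial : k)⁻¹) •
    ∑ σ : Equiv.Perm (Fin n),
      ((Equiv.Perm.sign σ : ℤ) •
        ((tpow k g n (fun i => (UniversalEnvelopingAlgebra.ι k (L := g)) (X (σ i)))) ⊗ₜ[k] m))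

lemma bCoboundary_antisymmetrisation {Δ : UEnv k g →ₗ[k] UEnv k g ⊗[k] UEnv k g}
    (hΔι : ∀ X : g, Δ (UniversalEnvelopingAlgebra.ι k X) =
      UniversalEnvelopingAlgebra.ι k X ⊗ₜ 1 + 1 ⊗ₜ UniversalEnvelopingAlgebra.ι k X)
    (n : ℕ) (m : M) (X : Fin n → g) :
    bCoboundary k g Δ M n (antisymmetrisation k M n m X) = 0 := by
  simp only [antisymmetrisation, map_smul, map_sum, map_zsmul,
    bCoboundary_tpow_tmul fun i => hΔι _, smul_zero, Finset.sum_const_zero]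

variable (π : UEnv k g →ₗ[k] g)

noncomputable def wedgeMap : ∀ n : ℕ, UPow k g n →ₗ[k] ExteriorAlgebra k g
  | 0 => (Algebra.linearMap k (ExteriorAlgebra k g) : k →ₗ[k] ExteriorAlgebra k g)
  | n + 1 => (TensorProduct.lift
      ((LinearMap.mul k (ExteriorAlgebra k g) ∘ₗ ExteriorAlgebra.ι k ∘ₗ π).compl₂ (wedgeMap n)) :
        UEnv k g ⊗[k] UPow k g n →ₗ[k] ExteriorAlgebra k g)

lemma wedgeMap_tpow (n : ℕ) (f : Fin n → UEnv k g) :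
    wedgeMap π n (tpow k g n f) = ExteriorAlgebra.ιMulti k n (π ∘ f) := by
  induction n with
  | zero => exact (map_one (algebraMap k (ExteriorAlgebra k g))).trans (by simp)
  | succ n ih =>
    show TensorProduct.lift _ (f 0 ⊗ₜ tpow k g n (Fin.tail f)) = _
    rw [TensorProduct.lift.tmul, LinearMap.compl₂_apply, ih, ExteriorAlgebra.ιMulti_succ_apply]
    rfl

variable (M) in
noncomputable def wedgeRetraction (n : ℕ) : UPow k g n ⊗[k] M →ₗ[k] M ⊗[k] ExteriorAlgebra k g :=
  (TensorProduct.comm k _ M).toLinearMap ∘ₗ LinearMap.rTensor M (wedgeMap π n)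

lemma wedgeRetraction_antisymmetrisation [CharZero k]
    (hπ : ∀ X : g, π (UniversalEnvelopingAlgebra.ι k X) = X) (n : ℕ) (m : M) (X : Fin n → g) :
    wedgeRetraction M π n (antisymmetrisation k M n m X) = m ⊗ₜ ExteriorAlgebra.ιMulti k n X := by
  have hσ : ∀ σ : Equiv.Perm (Fin n),
      wedgeRetraction M π n ((Equiv.Perm.sign σ : ℤ) •
        (tpow k g n (fun i => UniversalEnvelopingAlgebra.ι k (X (σ i))) ⊗ₜ m)) =
        m ⊗ₜ ExteriorAlgebra.ιMulti k n X := fun σ => by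
    have hXσ : (π ∘ fun i => UniversalEnvelopingAlgebra.ι k (X (σ i))) = X ∘ σ :=
      funext fun i => hπ (X (σ i))
    rw [map_zsmul, wedgeRetraction, LinearMap.comp_apply, LinearMap.rTensor_tmul, wedgeMap_tpow,
      hXσ, AlternatingMap.map_perm, Units.smul_def, LinearEquiv.coe_coe, TensorProduct.comm_tmul,
      TensorProduct.tmul_smul, smul_smul, ← Units.val_mul, Int.units_mul_self, Units.val_one,
      one_smul]
  rw [antisymmetrisation, map_smul, map_sum, Finset.sum_congr rfl fun σ _ => hσ σ,
    Finset.sum_const, Finset.card_univ, Fintype.card_perm, Fintype.card_fin,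
    ← Nat.cast_smul_eq_nsmul k, smul_smul,
    inv_mul_cancel₀ (Nat.cast_ne_zero.2 n.factorial_ne_zero), one_smul]

end Antisymmetrisation

theorem antisymmetrisation_injective_and_cocycle
    -- the generators are primitive, with vanishing counit
    (hΔι : ∀ X : g,
      Δ ((UniversalEnvelopingAlgebra.ι k (L := g)) X) =
        ((UniversalEnvelopingAlgebra.ι k (L := g)) X) ⊗ₜ[k] 1 +
          1 ⊗ₜ[k] ((UniversalEnvelopingAlgebra.ι k (L := g)) X))
    -- the antisymmetrisation maps
    (Ξ : ∀ n : ℕ, M ⊗[k] (⋀[k]^n g) →ₗ[k] UPow k g n ⊗[k] M)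
    (hΞ : ∀ (n : ℕ) (m : M) (X : Fin n → g),
      Ξ n (m ⊗ₜ[k]
          (⟨ExteriorAlgebra.ιMulti k n X,
            ExteriorAlgebra.ιMulti_range k n (Set.mem_range_self X)⟩ : ⋀[k]^n g)) =
        ((n.factorial : k)⁻¹) •
          ∑ σ : Equiv.Perm (Fin n),
            ((Equiv.Perm.sign σ : ℤ) •
              ((tpow k g n
                  (fun i => (UniversalEnvelopingAlgebra.ι k (L := g)) (X (σ i)))) ⊗ₜ[k] m))) :
    ∀ n : ℕ, Function.Injective (Ξ n) ∧
      ∀ x : M ⊗[k] (⋀[k]^n g), bCoboundary k g Δ M n (Ξ n x) = 0 := by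
  intro n
  obtain ⟨π, hπ⟩ := UniversalEnvelopingAlgebra.exists_leftInverse_ι (K := k) (L := g)
  have hretract : wedgeRetraction M π n ∘ₗ Ξ n = LinearMap.lTensor M (⋀[k]^n g).subtype := by
    ext m X
    exact (congrArg _ (hΞ n m X)).trans (wedgeRetraction_antisymmetrisation π hπ n m X)
  have hcocycle : bCoboundary k g Δ M n ∘ₗ Ξ n = 0 := by
    ext m X
    exact (congrArg _ (hΞ n m X)).trans (bCoboundary_antisymmetrisation hΔι n m X)
  have hinj : Function.Injective (wedgeRetraction M π n ∘ₗ Ξ n) :=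
    hretract ▸ Module.Flat.lTensor_preserves_injective_linearMap _ (⋀[k]^n g).injective_subtype
  exact ⟨Function.Injective.of_comp (f := wedgeRetraction M π n) hinj,
    LinearMap.congr_fun hcocycle⟩
end

section
/- In a left Hopf algebroid U over A, the translation map satisfies u_+ ⊗_{A^op} u_{-(1)} ⊗_A u_{-(2)} = u_{++} ⊗_{A^op} u_- ⊗_A u_{+-}, where on the right-hand side the tensor over A^op links the first and third components. -/
/-!
Left bialgebroids and left Hopf algebroids (Schauenburg's `×_A`-Hopf algebras).

Let `k` be a commutative ring, `A` a `k`-algebra, and `U` a `k`-algebra.  A left bialgebroid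
structure on `U` over `A` consists of a source map `s : A → U` (a ring homomorphism) and a
target map `t : A → U` (a ring anti-homomorphism) with commuting images, together with an
`A`-coring structure `(Δ, ε)` on `U` for the `(A,A)`-bimodule structure
`a ▷ u ◁ b := s(a)t(b)u`, such that `Δ` lands in the Takeuchi product and is multiplicative,
and `ε` satisfies `ε(u s(ε v)) = ε(uv) = ε(u t(ε v))`.

The relevant tensor products over the (noncommutative) base `A` are realised as quotients of
the tensor product over `k`:
* `T2 = U ⊗_A U` is `U ⊗[k] U` modulo `t(a)u ⊗ v - u ⊗ s(a)v`;
* `T3 = U ⊗_A U ⊗_A U` is `U ⊗[k] U ⊗[k] U` modulo the analogous relations in both places;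
* `TOp = U ⊗_{Aᵒᵖ} U` is `U ⊗[k] U` modulo `u t(a) ⊗ v - u ⊗ t(a)v`.

Auxiliary structure maps on these quotients (which exist uniquely, being induced by
well-defined maps on `U ⊗[k] U`) are bundled as data together with the equations
characterising them on generators.

A left Hopf algebroid is a left bialgebroid whose Hopf–Galois map
`β : U ⊗_{Aᵒᵖ} U → U ⊗_A U`, `u ⊗ v ↦ u_{(1)} ⊗ u_{(2)}v`, is bijective; the translation
map is `u_+ ⊗_{Aᵒᵖ} u_- := β⁻¹(u ⊗_A 1)`.
-/

open TensorProduct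

section Bgd

variable (k A U : Type*) [CommRing k] [Ring A] [Ring U] [Algebra k A] [Algebra k U]

/-- The defining relations of `U ⊗_A U` (as a quotient of `U ⊗[k] U`):
`(u ◁ a) ⊗ v = u ⊗ (a ▷ v)`, i.e. `t(a)u ⊗ v = u ⊗ s(a)v`. -/
def bgdRel (s t : A →ₗ[k] U) : Submodule k (U ⊗[k] U) :=
  Submodule.span k
    {x | ∃ (a : A) (u v : U), x = (t a * u) ⊗ₜ[k] v - u ⊗ₜ[k] (s a * v)}

/-- `U ⊗_A U`. -/
abbrev T2 (s t : A →ₗ[k] U) := (U ⊗[k] U) ⧸ bgdRel k A U s t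

/-- The canonical projection `U ⊗[k] U → U ⊗_A U`. -/
def π2 (s t : A →ₗ[k] U) : U ⊗[k] U →ₗ[k] T2 k A U s t := (bgdRel k A U s t).mkQ

/-- The defining relations of `U ⊗_A U ⊗_A U` (as a quotient of `U ⊗[k] (U ⊗[k] U)`). -/
def bgdRel3 (s t : A →ₗ[k] U) : Submodule k (U ⊗[k] (U ⊗[k] U)) :=
  Submodule.span k
    ({x | ∃ (a : A) (u v w : U),
        x = (t a * u) ⊗ₜ[k] (v ⊗ₜ[k] w) - u ⊗ₜ[k] ((s a * v) ⊗ₜ[k] w)} ∪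
     {x | ∃ (a : A) (u v w : U),
        x = u ⊗ₜ[k] ((t a * v) ⊗ₜ[k] w) - u ⊗ₜ[k] (v ⊗ₜ[k] (s a * w))})

/-- `U ⊗_A U ⊗_A U`. -/
abbrev T3 (s t : A →ₗ[k] U) := (U ⊗[k] (U ⊗[k] U)) ⧸ bgdRel3 k A U s t

/-- The canonical projection onto `U ⊗_A U ⊗_A U`. -/
def π3 (s t : A →ₗ[k] U) : U ⊗[k] (U ⊗[k] U) →ₗ[k] T3 k A U s t := (bgdRel3 k A U s t).mkQ

/-- The defining relations of `U ⊗_{Aᵒᵖ} U` (as a quotient of `U ⊗[k] U`):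
`(a ▸ u) ⊗ v = u ⊗ (v ◁ a)`, i.e. `u t(a) ⊗ v = u ⊗ t(a)v`. -/
def opRel (t : A →ₗ[k] U) : Submodule k (U ⊗[k] U) :=
  Submodule.span k
    {x | ∃ (a : A) (u v : U), x = (u * t a) ⊗ₜ[k] v - u ⊗ₜ[k] (t a * v)}

/-- `U ⊗_{Aᵒᵖ} U`. -/
abbrev TOp (t : A →ₗ[k] U) := (U ⊗[k] U) ⧸ opRel k A U t

/-- The canonical projection `U ⊗[k] U → U ⊗_{Aᵒᵖ} U`. -/
def πOp (t : A →ₗ[k] U) : U ⊗[k] U →ₗ[k] TOp k A U t := (opRel k A U t).mkQ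

variable (s t : A →ₗ[k] U)

/-- A left bialgebroid structure on the `k`-algebra `U` over the base `k`-algebra `A`,
with source map `s` and target map `t`. -/
structure LeftBialgebroid : Type _ where
  s_one : s 1 = 1
  s_mul : ∀ a b : A, s (a * b) = s a * s b
  t_one : t 1 = 1
  t_mul : ∀ a b : A, t (a * b) = t b * t a
  st_comm : ∀ a b : A, s a * t b = t b * s a
  /-- the coproduct -/
  Δ : U →ₗ[k] T2 k A U s t
  /-- the counit -/
  ε : U →ₗ[k] A
  Δ_one : Δ 1 = π2 k A U s t (1 ⊗ₜ[k] 1)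
  ε_one : ε 1 = 1
  /-- `(ε ⊗ id)`-contraction `u ⊗_A v ↦ s(ε u)v` -/
  cuL : T2 k A U s t →ₗ[k] U
  cuL_eq : ∀ x y : U, cuL (π2 k A U s t (x ⊗ₜ[k] y)) = s (ε x) * y
  /-- `(id ⊗ ε)`-contraction `u ⊗_A v ↦ t(ε v)u` -/
  cuR : T2 k A U s t →ₗ[k] U
  cuR_eq : ∀ x y : U, cuR (π2 k A U s t (x ⊗ₜ[k] y)) = t (ε y) * x
  /-- left counitality -/
  counit_left : ∀ u : U, cuL (Δ u) = u
  /-- right counitality -/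
  counit_right : ∀ u : U, cuR (Δ u) = u
  /-- the action `a ⬝ (u ⊗_A v) = u t(a) ⊗_A v` -/
  actL : A → T2 k A U s t →ₗ[k] T2 k A U s t
  actL_eq : ∀ (a : A) (x y : U),
    actL a (π2 k A U s t (x ⊗ₜ[k] y)) = π2 k A U s t ((x * t a) ⊗ₜ[k] y)
  /-- the action `(u ⊗_A v) ⬝ a = u ⊗_A v s(a)` -/
  actR : A → T2 k A U s t →ₗ[k] T2 k A U s t
  actR_eq : ∀ (a : A) (x y : U),
    actR a (π2 k A U s t (x ⊗ₜ[k] y)) = π2 k A U s t (x ⊗ₜ[k] (y * s a))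
  /-- the coproduct takes values in the Takeuchi product `U ×_A U` -/
  takeuchi : ∀ (a : A) (u : U), actL a (Δ u) = actR a (Δ u)
  /-- `Δ ⊗_A id` -/
  ΔL : T2 k A U s t →ₗ[k] T3 k A U s t
  ΔL_eq : ∀ (x y : U) (w : U ⊗[k] U), π2 k A U s t w = Δ x →
    ΔL (π2 k A U s t (x ⊗ₜ[k] y)) =
      ((π3 k A U s t) ∘ₗ
        (LinearMap.lTensor U ((TensorProduct.mk k U U).flip y))) w
  /-- `id ⊗_A Δ` -/
  ΔR : T2 k A U s t →ₗ[k] T3 k A U s t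
  ΔR_eq : ∀ (x y : U) (w : U ⊗[k] U), π2 k A U s t w = Δ y →
    ΔR (π2 k A U s t (x ⊗ₜ[k] y)) =
      ((π3 k A U s t) ∘ₗ (TensorProduct.mk k U (U ⊗[k] U) x)) w
  /-- coassociativity -/
  coassoc : ∀ u : U, ΔL (Δ u) = ΔR (Δ u)
  /-- right multiplication in both tensor legs: `(p ⊗_A q) ⬝ (x ⊗ y) = px ⊗_A qy` -/
  mulT : U ⊗[k] U →ₗ[k] T2 k A U s t →ₗ[k] T2 k A U s t
  mulT_eq : ∀ x y p q : U,
    mulT (x ⊗ₜ[k] y) (π2 k A U s t (p ⊗ₜ[k] q)) = π2 k A U s t ((p * x) ⊗ₜ[k] (q * y))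
  /-- multiplicativity of the coproduct -/
  Δ_mul : ∀ (u v : U) (w : U ⊗[k] U), π2 k A U s t w = Δ v → Δ (u * v) = mulT w (Δ u)
  /-- the counit identities `ε(u s(ε v)) = ε(uv) = ε(u t(ε v))` -/
  ε_s : ∀ u v : U, ε (u * s (ε v)) = ε (u * v)
  ε_t : ∀ u v : U, ε (u * t (ε v)) = ε (u * v)

/-- A left Hopf algebroid structure (`×_A`-Hopf algebra) on a left bialgebroid `B`:
the Hopf–Galois map `β : U ⊗_{Aᵒᵖ} U → U ⊗_A U`, `u ⊗ v ↦ u_{(1)} ⊗ u_{(2)}v`, together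
with a (two-sided) inverse. -/
structure LeftHopfAlgebroid (B : LeftBialgebroid k A U s t) where
  /-- right multiplication on the second leg of `U ⊗_A U` -/
  mulSnd : U → T2 k A U s t →ₗ[k] T2 k A U s t
  mulSnd_eq : ∀ v x y : U,
    mulSnd v (π2 k A U s t (x ⊗ₜ[k] y)) = π2 k A U s t (x ⊗ₜ[k] (y * v))
  /-- the Hopf–Galois map -/
  β : TOp k A U t →ₗ[k] T2 k A U s t
  β_eq : ∀ u v : U, β (πOp k A U t (u ⊗ₜ[k] v)) = mulSnd v (B.Δ u)
  /-- the inverse of the Hopf–Galois map -/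
  βinv : T2 k A U s t →ₗ[k] TOp k A U t
  β_left_inv : βinv ∘ₗ β = LinearMap.id
  β_right_inv : β ∘ₗ βinv = LinearMap.id

end Bgd

/-!
STATEMENT 18: In a left Hopf algebroid `U` over `A`, the translation map satisfies
`u_+ ⊗_{Aᵒᵖ} u_{-(1)} ⊗_A u_{-(2)} = u_{++} ⊗_{Aᵒᵖ} u_- ⊗_A u_{+-}`,
where on the right-hand side the tensor product over `Aᵒᵖ` links the first and third
tensor components.

The common target is the quotient `TMix` of `U ⊗[k] U ⊗[k] U` by the `⊗_A`-relation
between the second and third legs and the `⊗_{Aᵒᵖ}`-relation linking the first and third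
legs.  `Ψ` is `id ⊗ Δ` applied to the translation map (the left-hand side), built from the
insertion map `F x : U ⊗_A U → TMix`, `p ⊗ q ↦ x ⊗ p ⊗ q`; `Φ` is the right-hand side,
built from `G : (p ⊗_{Aᵒᵖ} q, y) ↦ p ⊗ y ⊗ q` applied to the translation map of the
first leg.
-/

section Stmt18

variable (k A U : Type*) [CommRing k] [Ring A] [Ring U] [Algebra k A] [Algebra k U]

/-- The relations of the mixed tensor product `U ⊗_{Aᵒᵖ} U ⊗_A U`, with `⊗_A` between the
second and third legs and `⊗_{Aᵒᵖ}` linking the first and third legs. -/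
def mixRel (s t : A →ₗ[k] U) : Submodule k (U ⊗[k] (U ⊗[k] U)) :=
  Submodule.span k
    ({x | ∃ (a : A) (u v w : U),
        x = u ⊗ₜ[k] ((t a * v) ⊗ₜ[k] w) - u ⊗ₜ[k] (v ⊗ₜ[k] (s a * w))} ∪
     {x | ∃ (a : A) (u v w : U),
        x = (u * t a) ⊗ₜ[k] (v ⊗ₜ[k] w) - u ⊗ₜ[k] (v ⊗ₜ[k] (t a * w))})

/-- `U ⊗_{Aᵒᵖ} U ⊗_A U` (with the `Aᵒᵖ`-relation linking legs one and three). -/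
abbrev TMix (s t : A →ₗ[k] U) := (U ⊗[k] (U ⊗[k] U)) ⧸ mixRel k A U s t

/-- The canonical projection onto `TMix`. -/
def πMix (s t : A →ₗ[k] U) : U ⊗[k] (U ⊗[k] U) →ₗ[k] TMix k A U s t :=
  (mixRel k A U s t).mkQ


/-!
Applying the Galois map first to legs one and three and then to legs one and two gives a map
`U ⊗_{Aᵒᵖ} U ⊗_A U → U ⊗_A U ⊗_A U`, `x ⊗ v ⊗ w ↦ x₍₁₎ ⊗ x₍₂₎ v ⊗ x₍₃₎ w`, which is injective
because both steps have left inverses built from the translation map. Composed with `Ψ` it is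
`(id ⊗ Δ) ∘ β`, by coassociativity and multiplicativity of `Δ`; composed with `Φ` it is
`(· ⊗ 1) ∘ β`, because `x₊₍₁₎ ⊗ x₊₍₂₎ x₋ = x ⊗ 1`. Both send `β⁻¹ (u ⊗ 1)` to `u ⊗ 1 ⊗ 1`.
-/

section HopfAlgebroid

variable {k A U}

theorem span_mul_one_tmul_mem {G : Set (U ⊗[k] (U ⊗[k] U))}
    (hG : ∀ g ∈ G, ∀ v w : U, g * (1 ⊗ₜ (v ⊗ₜ w)) ∈ G) (η : U ⊗[k] U) :
    ∀ n ∈ Submodule.span k G, n * (1 ⊗ₜ η) ∈ Submodule.span k G := by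
  induction η using TensorProduct.induction_on with
  | zero => simp
  | tmul v w =>
    intro n hn
    induction hn using Submodule.span_induction with
    | mem g hg => exact Submodule.subset_span (hG g hg v w)
    | zero => simp
    | add x y _ _ hx hy => rw [add_mul]; exact add_mem hx hy
    | smul c x _ hx => rw [smul_mul_assoc]; exact Submodule.smul_mem _ c hx
  | add η η' h h' =>
    intro n hn
    rw [tmul_add, mul_add]
    exact add_mem (h n hn) (h' n hn)

class TailStable (N : Submodule k (U ⊗[k] (U ⊗[k] U))) : Prop where
  mul_mem : ∀ η : U ⊗[k] U, ∀ n ∈ N, n * (1 ⊗ₜ η) ∈ N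

def mulTail {N : Submodule k (U ⊗[k] (U ⊗[k] U))} [TailStable N] :
    U ⊗[k] U →ₗ[k] (U ⊗[k] (U ⊗[k] U)) ⧸ N →ₗ[k] (U ⊗[k] (U ⊗[k] U)) ⧸ N :=
  N.mapQLinear N ∘ₗ ((LinearMap.mul k _).flip ∘ₗ
    (Algebra.TensorProduct.includeRight : U ⊗[k] U →ₐ[k] U ⊗[k] (U ⊗[k] U)).toLinearMap).codRestrict
      _ fun η _ hn => TailStable.mul_mem η _ hn

section MulTail

variable {N : Submodule k (U ⊗[k] (U ⊗[k] U))} [TailStable N]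

@[simp]
theorem mulTail_mk (η : U ⊗[k] U) (x : U ⊗[k] (U ⊗[k] U)) :
    mulTail η (Submodule.Quotient.mk x : _ ⧸ N) = Submodule.Quotient.mk (x * (1 ⊗ₜ η)) :=
  rfl

theorem mulTail_mul (η η' : U ⊗[k] U) (ξ : (U ⊗[k] (U ⊗[k] U)) ⧸ N) :
    mulTail (η * η') ξ = mulTail η' (mulTail η ξ) := by
  induction ξ using Submodule.Quotient.induction_on with
  | H x => simp [mul_assoc, Algebra.TensorProduct.tmul_mul_tmul]

end MulTail

variable {s t : A →ₗ[k] U}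

instance : TailStable (bgdRel3 k A U s t) where
  mul_mem := span_mul_one_tmul_mem <| by
    rintro _ (⟨a, u, v, w, rfl⟩ | ⟨a, u, v, w, rfl⟩) v' w'
    · exact Or.inl ⟨a, u, v * v', w * w', by simp [sub_mul, mul_assoc]⟩
    · exact Or.inr ⟨a, u, v * v', w * w', by simp [sub_mul, mul_assoc]⟩

instance : TailStable (mixRel k A U s t) where
  mul_mem := span_mul_one_tmul_mem <| by
    rintro _ (⟨a, u, v, w, rfl⟩ | ⟨a, u, v, w, rfl⟩) v' w'
    · exact Or.inl ⟨a, u, v * v', w * w', by simp [sub_mul, mul_assoc]⟩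
    · exact Or.inr ⟨a, u, v * v', w * w', by simp [sub_mul, mul_assoc]⟩

/-- The target of the Galois map on legs one and three of `TMix`: `⊗_A` links legs one and three,
`⊗_{Aᵒᵖ}` links legs one and two. -/
def midRel (s t : A →ₗ[k] U) : Submodule k (U ⊗[k] (U ⊗[k] U)) :=
  Submodule.span k
    ({x | ∃ (a : A) (u v w : U),
        x = (t a * u) ⊗ₜ[k] (v ⊗ₜ[k] w) - u ⊗ₜ[k] (v ⊗ₜ[k] (s a * w))} ∪
     {x | ∃ (a : A) (u v w : U),
        x = (u * t a) ⊗ₜ[k] (v ⊗ₜ[k] w) - u ⊗ₜ[k] ((t a * v) ⊗ₜ[k] w)})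

abbrev TMid (s t : A →ₗ[k] U) := (U ⊗[k] (U ⊗[k] U)) ⧸ midRel s t

def πMid (s t : A →ₗ[k] U) : U ⊗[k] (U ⊗[k] U) →ₗ[k] TMid s t := (midRel s t).mkQ

instance : TailStable (midRel s t) where
  mul_mem := span_mul_one_tmul_mem <| by
    rintro _ (⟨a, u, v, w, rfl⟩ | ⟨a, u, v, w, rfl⟩) v' w'
    · exact Or.inl ⟨a, u, v * v', w * w', by simp [sub_mul, mul_assoc]⟩
    · exact Or.inr ⟨a, u, v * v', w * w', by simp [sub_mul, mul_assoc]⟩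

@[simp]
theorem mulTail_π3 (η : U ⊗[k] U) (x : U ⊗[k] (U ⊗[k] U)) :
    mulTail η (π3 k A U s t x) = π3 k A U s t (x * (1 ⊗ₜ η)) :=
  rfl

@[simp]
theorem mulTail_πMix (η : U ⊗[k] U) (x : U ⊗[k] (U ⊗[k] U)) :
    mulTail η (πMix k A U s t x) = πMix k A U s t (x * (1 ⊗ₜ η)) :=
  rfl

@[simp]
theorem mulTail_πMid (η : U ⊗[k] U) (x : U ⊗[k] (U ⊗[k] U)) :
    mulTail η (πMid s t x) = πMid s t (x * (1 ⊗ₜ η)) :=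
  rfl

theorem πOp_mul_t_tmul (a : A) (x y : U) :
    πOp k A U t ((x * t a) ⊗ₜ y) = πOp k A U t (x ⊗ₜ (t a * y)) :=
  (Submodule.Quotient.eq _).2 (Submodule.subset_span ⟨a, x, y, rfl⟩)

theorem π2_t_mul_tmul (a : A) (x y : U) :
    π2 k A U s t ((t a * x) ⊗ₜ y) = π2 k A U s t (x ⊗ₜ (s a * y)) :=
  (Submodule.Quotient.eq _).2 (Submodule.subset_span ⟨a, x, y, rfl⟩)

theorem π3_tmul_t_mul_tmul (a : A) (x v w : U) :
    π3 k A U s t (x ⊗ₜ ((t a * v) ⊗ₜ w)) = π3 k A U s t (x ⊗ₜ (v ⊗ₜ (s a * w))) :=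
  (Submodule.Quotient.eq _).2 (Submodule.subset_span (Or.inr ⟨a, x, v, w, rfl⟩))

theorem πMix_tmul_t_mul_tmul (a : A) (x v w : U) :
    πMix k A U s t (x ⊗ₜ ((t a * v) ⊗ₜ w)) = πMix k A U s t (x ⊗ₜ (v ⊗ₜ (s a * w))) :=
  (Submodule.Quotient.eq _).2 (Submodule.subset_span (Or.inl ⟨a, x, v, w, rfl⟩))

theorem πMid_t_mul_tmul (a : A) (x v w : U) :
    πMid s t ((t a * x) ⊗ₜ (v ⊗ₜ w)) = πMid s t (x ⊗ₜ (v ⊗ₜ (s a * w))) :=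
  (Submodule.Quotient.eq _).2 (Submodule.subset_span (Or.inl ⟨a, x, v, w, rfl⟩))

theorem πMid_mul_t_tmul (a : A) (x v w : U) :
    πMid s t ((x * t a) ⊗ₜ (v ⊗ₜ w)) = πMid s t (x ⊗ₜ ((t a * v) ⊗ₜ w)) :=
  (Submodule.Quotient.eq _).2 (Submodule.subset_span (Or.inr ⟨a, x, v, w, rfl⟩))

@[elab_as_elim]
theorem T2.induction_on {P : T2 k A U s t → Prop} (ξ : T2 k A U s t)
    (tmul : ∀ p q : U, P (π2 k A U s t (p ⊗ₜ q)))
    (add : ∀ ξ ξ', P ξ → P ξ' → P (ξ + ξ')) : P ξ := by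
  obtain ⟨z, rfl⟩ := (bgdRel k A U s t).mkQ_surjective ξ
  induction z using TensorProduct.induction_on with
  | zero => simpa using tmul 0 0
  | tmul p q => exact tmul p q
  | add z z' h h' => simpa using add _ _ h h'

@[elab_as_elim]
theorem TOp.induction_on {P : TOp k A U t → Prop} (ξ : TOp k A U t)
    (tmul : ∀ p q : U, P (πOp k A U t (p ⊗ₜ q)))
    (add : ∀ ξ ξ', P ξ → P ξ' → P (ξ + ξ')) : P ξ := by
  obtain ⟨z, rfl⟩ := (opRel k A U t).mkQ_surjective ξ
  induction z using TensorProduct.induction_on with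
  | zero => simpa using tmul 0 0
  | tmul p q => exact tmul p q
  | add z z' h h' => simpa using add _ _ h h'

theorem T2.hom_ext {M : Type*} [AddCommGroup M] [Module k M] {f g : T2 k A U s t →ₗ[k] M}
    (h : ∀ p q : U, f (π2 k A U s t (p ⊗ₜ q)) = g (π2 k A U s t (p ⊗ₜ q))) : f = g :=
  Submodule.linearMap_qext _ (TensorProduct.ext' h)

def T2.mulLeftSnd (r : U) (hr : ∀ a, r * s a = s a * r) : T2 k A U s t →ₗ[k] T2 k A U s t :=
  (bgdRel k A U s t).mapQ _ (LinearMap.mulLeft k (1 ⊗ₜ r)) <| Submodule.span_le.2 <| by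
    rintro _ ⟨a, u, v, rfl⟩
    refine Submodule.subset_span ⟨a, u, r * v, ?_⟩
    simp [mul_sub, ← mul_assoc, hr]

@[simp]
theorem T2.mulLeftSnd_mk (r : U) (hr : ∀ a, r * s a = s a * r) (z : U ⊗[k] U) :
    T2.mulLeftSnd r hr (π2 k A U s t z) = π2 k A U s t ((1 ⊗ₜ r) * z) :=
  rfl

def TOp.mulRightSnd (q : U) : TOp k A U t →ₗ[k] TOp k A U t :=
  (opRel k A U t).mapQ _ (LinearMap.mulRight k (1 ⊗ₜ q)) <| Submodule.span_le.2 <| by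
    rintro _ ⟨a, u, v, rfl⟩
    refine Submodule.subset_span ⟨a, u, v * q, ?_⟩
    simp [sub_mul, mul_assoc]

@[simp]
theorem TOp.mulRightSnd_mk (q : U) (z : U ⊗[k] U) :
    TOp.mulRightSnd q (πOp k A U t z) = πOp k A U t (z * (1 ⊗ₜ q)) :=
  rfl

def TOp.mulLeftFst (r : U) : TOp k A U t →ₗ[k] TOp k A U t :=
  (opRel k A U t).mapQ _ (LinearMap.mulLeft k (r ⊗ₜ 1)) <| Submodule.span_le.2 <| by
    rintro _ ⟨a, u, v, rfl⟩
    refine Submodule.subset_span ⟨a, r * u, v, ?_⟩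
    simp [mul_sub, mul_assoc]

@[simp]
theorem TOp.mulLeftFst_mk (r : U) (z : U ⊗[k] U) :
    TOp.mulLeftFst r (πOp k A U t z) = πOp k A U t ((r ⊗ₜ 1) * z) :=
  rfl

def TOp.mulLeftSnd (r : U) (hr : ∀ a, r * t a = t a * r) : TOp k A U t →ₗ[k] TOp k A U t :=
  (opRel k A U t).mapQ _ (LinearMap.mulLeft k (1 ⊗ₜ r)) <| Submodule.span_le.2 <| by
    rintro _ ⟨a, u, v, rfl⟩
    refine Submodule.subset_span ⟨a, u, r * v, ?_⟩
    simp [mul_sub, ← mul_assoc, hr]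

@[simp]
theorem TOp.mulLeftSnd_mk (r : U) (hr : ∀ a, r * t a = t a * r) (z : U ⊗[k] U) :
    TOp.mulLeftSnd r hr (πOp k A U t z) = πOp k A U t ((1 ⊗ₜ r) * z) :=
  rfl

def T2.toT3 : T2 k A U s t →ₗ[k] T3 k A U s t :=
  (bgdRel k A U s t).mapQ _ (LinearMap.lTensor U ((TensorProduct.mk k U U).flip 1)) <|
    Submodule.span_le.2 <| by
      rintro _ ⟨a, u, v, rfl⟩
      exact Submodule.subset_span (Or.inl ⟨a, u, v, 1, by simp⟩)

def T2.toTMid : T2 k A U s t →ₗ[k] TMid s t :=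
  (bgdRel k A U s t).mapQ _ (LinearMap.lTensor U (TensorProduct.mk k U U 1)) <|
    Submodule.span_le.2 <| by
      rintro _ ⟨a, u, v, rfl⟩
      exact Submodule.subset_span (Or.inl ⟨a, u, 1, v, by simp⟩)

def TOp.toTMid : TOp k A U t →ₗ[k] TMid s t :=
  (opRel k A U t).mapQ _ (LinearMap.lTensor U ((TensorProduct.mk k U U).flip 1)) <|
    Submodule.span_le.2 <| by
      rintro _ ⟨a, u, v, rfl⟩
      exact Submodule.subset_span (Or.inr ⟨a, u, v, 1, by simp⟩)

def TOp.toTMix : TOp k A U t →ₗ[k] TMix k A U s t :=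
  (opRel k A U t).mapQ _ (LinearMap.lTensor U (TensorProduct.mk k U U 1)) <|
    Submodule.span_le.2 <| by
      rintro _ ⟨a, u, v, rfl⟩
      exact Submodule.subset_span (Or.inr ⟨a, u, 1, v, by simp⟩)

@[simp]
theorem T2.toT3_mk (p q : U) :
    T2.toT3 (π2 k A U s t (p ⊗ₜ q)) = π3 k A U s t (p ⊗ₜ (q ⊗ₜ 1)) :=
  rfl

@[simp]
theorem T2.toTMid_mk (p q : U) :
    T2.toTMid (π2 k A U s t (p ⊗ₜ q)) = πMid s t (p ⊗ₜ (1 ⊗ₜ q)) :=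
  rfl

@[simp]
theorem TOp.toTMid_mk (p q : U) :
    TOp.toTMid (πOp k A U t (p ⊗ₜ q)) = πMid s t (p ⊗ₜ (q ⊗ₜ 1)) :=
  rfl

@[simp]
theorem TOp.toTMix_mk (p q : U) :
    TOp.toTMix (πOp k A U t (p ⊗ₜ q)) = πMix k A U s t (p ⊗ₜ (1 ⊗ₜ q)) :=
  rfl

theorem TOp.toTMix_mulRightSnd (q : U) (ξ : TOp k A U t) :
    TOp.toTMix (TOp.mulRightSnd q ξ) = mulTail (1 ⊗ₜ q) (TOp.toTMix ξ : TMix k A U s t) := by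
  induction ξ using TOp.induction_on with
  | tmul x y => simp [Algebra.TensorProduct.tmul_mul_tmul]
  | add ξ ξ' h h' => simp only [map_add, h, h']

theorem TOp.toTMix_mulLeftSnd (a : A) (hr : ∀ b, s a * t b = t b * s a) (ξ : TOp k A U t) :
    TOp.toTMix (TOp.mulLeftSnd (s a) hr ξ) = mulTail (t a ⊗ₜ 1) (TOp.toTMix ξ : TMix k A U s t) := by
  induction ξ using TOp.induction_on with
  | tmul x y =>
    simpa [Algebra.TensorProduct.tmul_mul_tmul] using (πMix_tmul_t_mul_tmul a x 1 y).symm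
  | add ξ ξ' h h' => simp only [map_add, h, h']

theorem TOp.toTMid_mulRightSnd (q : U) (ξ : TOp k A U t) :
    TOp.toTMid (TOp.mulRightSnd q ξ) = mulTail (q ⊗ₜ 1) (TOp.toTMid ξ : TMid s t) := by
  induction ξ using TOp.induction_on with
  | tmul x y => simp [Algebra.TensorProduct.tmul_mul_tmul]
  | add ξ ξ' h h' => simp only [map_add, h, h']

theorem TOp.toTMid_mulLeftFst (a : A) (ξ : TOp k A U t) :
    TOp.toTMid (TOp.mulLeftFst (t a) ξ) = mulTail (1 ⊗ₜ s a) (TOp.toTMid ξ : TMid s t) := by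
  induction ξ using TOp.induction_on with
  | tmul x y => simp [Algebra.TensorProduct.tmul_mul_tmul, πMid_t_mul_tmul]
  | add ξ ξ' h h' => simp only [map_add, h, h']

theorem T2.toT3_mulLeftSnd (a : A) (hr : ∀ b, t a * s b = s b * t a) (ξ : T2 k A U s t) :
    T2.toT3 (T2.mulLeftSnd (t a) hr ξ) = mulTail (1 ⊗ₜ s a) (T2.toT3 ξ) := by
  induction ξ using T2.induction_on with
  | tmul x y => simp [Algebra.TensorProduct.tmul_mul_tmul, π3_tmul_t_mul_tmul]
  | add ξ ξ' h h' => simp only [map_add, h, h']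

theorem T2.toTMid_actL {B : LeftBialgebroid k A U s t} (a : A) (ξ : T2 k A U s t) :
    T2.toTMid (B.actL a ξ) = mulTail (t a ⊗ₜ 1) (T2.toTMid ξ) := by
  induction ξ using T2.induction_on with
  | tmul x y => simp [B.actL_eq, Algebra.TensorProduct.tmul_mul_tmul, πMid_mul_t_tmul]
  | add ξ ξ' h h' => simp only [map_add, h, h']

theorem exists_π2_eq (ξ : T2 k A U s t) : ∃ ω, π2 k A U s t ω = ξ :=
  (bgdRel k A U s t).mkQ_surjective ξ

namespace LeftBialgebroid

variable (B : LeftBialgebroid k A U s t)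

theorem mulT_mk (ω z : U ⊗[k] U) : B.mulT ω (π2 k A U s t z) = π2 k A U s t (z * ω) := by
  have h (p q : U) : B.mulT ω (π2 k A U s t (p ⊗ₜ q)) = π2 k A U s t ((p ⊗ₜ q) * ω) := by
    induction ω using TensorProduct.induction_on with
    | zero => simp
    | tmul x y => rw [B.mulT_eq, Algebra.TensorProduct.tmul_mul_tmul]
    | add ω ω' h h' => rw [map_add, LinearMap.add_apply, h, h', mul_add, map_add]
  induction z using TensorProduct.induction_on with
  | zero => simp
  | tmul p q => exact h p q
  | add z z' h h' => rw [map_add, map_add, h, h', add_mul, map_add]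

theorem Δ_mul_of_eq {x y : U} {ω ω' : U ⊗[k] U} (hω : π2 k A U s t ω = B.Δ x)
    (hω' : π2 k A U s t ω' = B.Δ y) : B.Δ (x * y) = π2 k A U s t (ω * ω') := by
  rw [B.Δ_mul x y ω' hω', ← hω, mulT_mk]

theorem ΔL_mk (p q : U) :
    B.ΔL (π2 k A U s t (p ⊗ₜ q)) = mulTail (1 ⊗ₜ q) (T2.toT3 (B.Δ p)) := by
  obtain ⟨ω, hω⟩ := exists_π2_eq (B.Δ p)
  rw [B.ΔL_eq p q ω hω, ← hω]
  clear hω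
  induction ω using TensorProduct.induction_on with
  | zero => simp
  | tmul c d => simp [Algebra.TensorProduct.tmul_mul_tmul]
  | add ω ω' h h' => simp only [map_add, h, h']

end LeftBialgebroid

namespace LeftHopfAlgebroid

variable {B : LeftBialgebroid k A U s t}

variable (H : LeftHopfAlgebroid k A U s t B)

theorem β_βinv (ξ : T2 k A U s t) : H.β (H.βinv ξ) = ξ :=
  LinearMap.congr_fun H.β_right_inv ξ

theorem βinv_β (ξ : TOp k A U t) : H.βinv (H.β ξ) = ξ :=
  LinearMap.congr_fun H.β_left_inv ξ

theorem β_injective : Function.Injective H.β :=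
  Function.LeftInverse.injective H.βinv_β

theorem mulSnd_mk (q : U) (z : U ⊗[k] U) :
    H.mulSnd q (π2 k A U s t z) = π2 k A U s t (z * (1 ⊗ₜ q)) := by
  induction z using TensorProduct.induction_on with
  | zero => simp
  | tmul x y => simp [H.mulSnd_eq]
  | add z z' h h' => rw [map_add, map_add, h, h', add_mul, map_add]

theorem mulSnd_mul (q q' : U) (ξ : T2 k A U s t) :
    H.mulSnd (q * q') ξ = H.mulSnd q' (H.mulSnd q ξ) := by
  induction ξ using T2.induction_on with
  | tmul x y => simp [H.mulSnd_eq, mul_assoc]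
  | add ξ ξ' h h' => simp only [map_add, h, h']

theorem actR_eq_mulSnd (a : A) : B.actR a = H.mulSnd (s a) :=
  T2.hom_ext fun x y => by rw [B.actR_eq, H.mulSnd_eq]

theorem mulSnd_one (ξ : T2 k A U s t) : H.mulSnd 1 ξ = ξ := by
  induction ξ using T2.induction_on with
  | tmul x y => rw [H.mulSnd_eq, mul_one]
  | add ξ ξ' h h' => rw [map_add, h, h']

/-- Apply `β` to `1 · t a ⊗ 1 = 1 ⊗ t a · 1` in `U ⊗_{Aᵒᵖ} U`. -/
theorem Δ_t (H : LeftHopfAlgebroid k A U s t B) (a : A) :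
    B.Δ (t a) = π2 k A U s t (1 ⊗ₜ t a) := by
  have h := congrArg H.β (πOp_mul_t_tmul a (1 : U) 1)
  rwa [one_mul, mul_one, H.β_eq, H.β_eq, H.mulSnd_one, B.Δ_one, H.mulSnd_eq, one_mul] at h

theorem Δ_mul_t (x : U) (a : A) : B.Δ (x * t a) = H.mulSnd (t a) (B.Δ x) := by
  obtain ⟨ω, hω⟩ := exists_π2_eq (B.Δ x)
  rw [B.Δ_mul_of_eq hω (H.Δ_t a).symm, ← hω, H.mulSnd_mk]

theorem Δ_t_mul (H : LeftHopfAlgebroid k A U s t B) (a : A) (x : U) :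
    B.Δ (t a * x) = T2.mulLeftSnd (t a) (fun b => (B.st_comm b a).symm) (B.Δ x) := by
  obtain ⟨ω, hω⟩ := exists_π2_eq (B.Δ x)
  rw [B.Δ_mul_of_eq (H.Δ_t a).symm hω, ← hω, T2.mulLeftSnd_mk]

def translation : U →ₗ[k] TOp k A U t :=
  H.βinv ∘ₗ π2 k A U s t ∘ₗ (TensorProduct.mk k U U).flip 1

theorem translation_apply (x : U) : H.translation x = H.βinv (π2 k A U s t (x ⊗ₜ 1)) :=
  rfl

theorem β_translation (x : U) : H.β (H.translation x) = π2 k A U s t (x ⊗ₜ 1) :=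
  H.β_βinv _

theorem βinv_Δ (x : U) : H.βinv (B.Δ x) = πOp k A U t (x ⊗ₜ 1) := by
  rw [← H.mulSnd_one (B.Δ x), ← H.β_eq, βinv_β]

theorem β_mulRightSnd (q : U) (ξ : TOp k A U t) :
    H.β (TOp.mulRightSnd q ξ) = H.mulSnd q (H.β ξ) := by
  induction ξ using TOp.induction_on with
  | tmul x y => rw [TOp.mulRightSnd_mk, Algebra.TensorProduct.tmul_mul_tmul, mul_one, H.β_eq,
      H.β_eq, mulSnd_mul]
  | add ξ ξ' h h' => simp only [map_add, h, h']

theorem βinv_π2 (p q : U) :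
    H.βinv (π2 k A U s t (p ⊗ₜ q)) = TOp.mulRightSnd q (H.translation p) := by
  apply H.β_injective
  rw [β_βinv, β_mulRightSnd, β_translation, H.mulSnd_eq, one_mul]

theorem translation_t_mul (a : A) (x : U) :
    H.translation (t a * x) = TOp.mulRightSnd (s a) (H.translation x) := by
  rw [translation_apply, π2_t_mul_tmul, mul_one, βinv_π2]

theorem actL_mulSnd (a : A) (q : U) (ξ : T2 k A U s t) :
    B.actL a (H.mulSnd q ξ) = H.mulSnd q (B.actL a ξ) := by
  induction ξ using T2.induction_on with
  | tmul x y => simp only [H.mulSnd_eq, B.actL_eq]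
  | add ξ ξ' h h' => simp only [map_add, h, h']

theorem mulLeftSnd_mulSnd (r : U) (hr : ∀ a, r * s a = s a * r) (q : U) (ξ : T2 k A U s t) :
    T2.mulLeftSnd r hr (H.mulSnd q ξ) = H.mulSnd q (T2.mulLeftSnd r hr ξ) := by
  induction ξ using T2.induction_on with
  | tmul x y => simp [H.mulSnd_eq, Algebra.TensorProduct.tmul_mul_tmul, mul_assoc]
  | add ξ ξ' h h' => simp only [map_add, h, h']

theorem β_mulLeftSnd (a : A) (ξ : TOp k A U t) :
    H.β (TOp.mulLeftSnd (s a) (B.st_comm a) ξ) = B.actL a (H.β ξ) := by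
  induction ξ using TOp.induction_on with
  | tmul p q =>
    rw [TOp.mulLeftSnd_mk, Algebra.TensorProduct.tmul_mul_tmul, one_mul, H.β_eq, H.β_eq,
      mulSnd_mul, ← actR_eq_mulSnd, ← B.takeuchi, actL_mulSnd]
  | add ξ ξ' h h' => simp only [map_add, h, h']

theorem β_mulLeftFst (a : A) (ξ : TOp k A U t) :
    H.β (TOp.mulLeftFst (t a) ξ) =
      T2.mulLeftSnd (t a) (fun b => (B.st_comm b a).symm) (H.β ξ) := by
  induction ξ using TOp.induction_on with
  | tmul p q =>
    rw [TOp.mulLeftFst_mk, Algebra.TensorProduct.tmul_mul_tmul, one_mul, H.β_eq, H.β_eq,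
      H.Δ_t_mul, mulLeftSnd_mulSnd]
  | add ξ ξ' h h' => simp only [map_add, h, h']

theorem translation_mul_t (a : A) (x : U) :
    H.translation (x * t a) = TOp.mulLeftSnd (s a) (B.st_comm a) (H.translation x) := by
  apply H.β_injective
  rw [β_translation, β_mulLeftSnd, β_translation, B.actL_eq]

theorem mulLeftFst_translation (a : A) (x : U) :
    TOp.mulLeftFst (t a) (H.translation x) = TOp.mulRightSnd (t a) (H.translation x) := by
  apply H.β_injective
  rw [β_mulLeftFst, β_mulRightSnd, β_translation, T2.mulLeftSnd_mk, H.mulSnd_mk]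
  simp [Algebra.TensorProduct.tmul_mul_tmul]

theorem toTMid_mulSnd (q : U) (ξ : T2 k A U s t) :
    T2.toTMid (H.mulSnd q ξ) = mulTail (1 ⊗ₜ q) (T2.toTMid ξ) := by
  induction ξ using T2.induction_on with
  | tmul x y => simp [H.mulSnd_eq, Algebra.TensorProduct.tmul_mul_tmul]
  | add ξ ξ' h h' => simp only [map_add, h, h']

theorem toT3_mulSnd (q : U) (ξ : T2 k A U s t) :
    T2.toT3 (H.mulSnd q ξ) = mulTail (q ⊗ₜ 1) (T2.toT3 ξ) := by
  induction ξ using T2.induction_on with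
  | tmul x y => simp [H.mulSnd_eq, Algebra.TensorProduct.tmul_mul_tmul]
  | add ξ ξ' h h' => simp only [map_add, h, h']

/-- The Galois map on legs one and three, `x ⊗ v ⊗ w ↦ (x₍₁₎ ⊗ 1 ⊗ x₍₂₎)(1 ⊗ v ⊗ w)`. -/
def β₁₃ : TMix k A U s t →ₗ[k] TMid s t :=
  (mixRel k A U s t).liftQ (TensorProduct.lift (mulTail.flip ∘ₗ T2.toTMid ∘ₗ B.Δ)) <|
    Submodule.span_le.2 <| by
      rintro _ (⟨a, u, v, w, rfl⟩ | ⟨a, u, v, w, rfl⟩) <;>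
        simp only [SetLike.mem_coe, LinearMap.mem_ker, map_sub, TensorProduct.lift.tmul,
          LinearMap.comp_apply, LinearMap.flip_apply, sub_eq_zero]
      · calc mulTail ((t a * v) ⊗ₜ w) (T2.toTMid (B.Δ u))
            = mulTail (v ⊗ₜ w) (T2.toTMid (B.actL a (B.Δ u))) := by
              rw [T2.toTMid_actL, ← mulTail_mul]; simp
          _ = mulTail (v ⊗ₜ (s a * w)) (T2.toTMid (B.Δ u)) := by
              rw [B.takeuchi, H.actR_eq_mulSnd, toTMid_mulSnd, ← mulTail_mul]; simp
      · rw [H.Δ_mul_t, toTMid_mulSnd, ← mulTail_mul]; simp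

def β₁₃inv : TMid s t →ₗ[k] TMix k A U s t :=
  (midRel s t).liftQ (TensorProduct.lift (mulTail.flip ∘ₗ TOp.toTMix ∘ₗ H.translation)) <|
    Submodule.span_le.2 <| by
      rintro _ (⟨a, u, v, w, rfl⟩ | ⟨a, u, v, w, rfl⟩) <;>
        simp only [SetLike.mem_coe, LinearMap.mem_ker, map_sub, TensorProduct.lift.tmul,
          LinearMap.comp_apply, LinearMap.flip_apply, sub_eq_zero]
      · rw [translation_t_mul, TOp.toTMix_mulRightSnd, ← mulTail_mul]; simp
      · rw [translation_mul_t, TOp.toTMix_mulLeftSnd, ← mulTail_mul]; simp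

/-- The Galois map on legs one and two, `x ⊗ v ⊗ w ↦ (x₍₁₎ ⊗ x₍₂₎ ⊗ 1)(1 ⊗ v ⊗ w)`. -/
def β₁₂ : TMid s t →ₗ[k] T3 k A U s t :=
  (midRel s t).liftQ (TensorProduct.lift (mulTail.flip ∘ₗ T2.toT3 ∘ₗ B.Δ)) <|
    Submodule.span_le.2 <| by
      rintro _ (⟨a, u, v, w, rfl⟩ | ⟨a, u, v, w, rfl⟩) <;>
        simp only [SetLike.mem_coe, LinearMap.mem_ker, map_sub, TensorProduct.lift.tmul,
          LinearMap.comp_apply, LinearMap.flip_apply, sub_eq_zero]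
      · rw [H.Δ_t_mul, T2.toT3_mulLeftSnd, ← mulTail_mul]; simp
      · rw [H.Δ_mul_t, toT3_mulSnd, ← mulTail_mul]; simp

def β₁₂inv : T3 k A U s t →ₗ[k] TMid s t :=
  (bgdRel3 k A U s t).liftQ (TensorProduct.lift (mulTail.flip ∘ₗ TOp.toTMid ∘ₗ H.translation)) <|
    Submodule.span_le.2 <| by
      rintro _ (⟨a, u, v, w, rfl⟩ | ⟨a, u, v, w, rfl⟩) <;>
        simp only [SetLike.mem_coe, LinearMap.mem_ker, map_sub, TensorProduct.lift.tmul,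
          LinearMap.comp_apply, LinearMap.flip_apply, sub_eq_zero]
      · rw [translation_t_mul, TOp.toTMid_mulRightSnd, ← mulTail_mul]; simp
      · calc mulTail ((t a * v) ⊗ₜ w) (TOp.toTMid (H.translation u))
            = mulTail (v ⊗ₜ w) (TOp.toTMid (TOp.mulRightSnd (t a) (H.translation u))) := by
              rw [TOp.toTMid_mulRightSnd, ← mulTail_mul]; simp
          _ = mulTail (v ⊗ₜ (s a * w)) (TOp.toTMid (H.translation u)) := by
              rw [← mulLeftFst_translation, TOp.toTMid_mulLeftFst, ← mulTail_mul]; simp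

theorem β₁₃_mk (x : U) (η : U ⊗[k] U) :
    H.β₁₃ (πMix k A U s t (x ⊗ₜ η)) = mulTail η (T2.toTMid (B.Δ x)) :=
  (Submodule.liftQ_apply _ _ _).trans (TensorProduct.lift.tmul _ _)

theorem β₁₃inv_mk (x : U) (η : U ⊗[k] U) :
    H.β₁₃inv (πMid s t (x ⊗ₜ η)) = mulTail η (TOp.toTMix (H.translation x)) :=
  (Submodule.liftQ_apply _ _ _).trans (TensorProduct.lift.tmul _ _)

theorem β₁₂_mk (x : U) (η : U ⊗[k] U) :
    H.β₁₂ (πMid s t (x ⊗ₜ η)) = mulTail η (T2.toT3 (B.Δ x)) :=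
  (Submodule.liftQ_apply _ _ _).trans (TensorProduct.lift.tmul _ _)

theorem β₁₂inv_mk (x : U) (η : U ⊗[k] U) :
    H.β₁₂inv (π3 k A U s t (x ⊗ₜ η)) = mulTail η (TOp.toTMid (H.translation x)) :=
  (Submodule.liftQ_apply _ _ _).trans (TensorProduct.lift.tmul _ _)

theorem β₁₃inv_β₁₃ : Function.LeftInverse H.β₁₃inv H.β₁₃ := by
  have key (η : U ⊗[k] U) (ζ : T2 k A U s t) :
      H.β₁₃inv (mulTail η (T2.toTMid ζ)) = mulTail η (TOp.toTMix (H.βinv ζ)) := by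
    induction ζ using T2.induction_on with
    | tmul p q =>
      rw [βinv_π2, TOp.toTMix_mulRightSnd, ← mulTail_mul, T2.toTMid_mk, mulTail_πMid,
        Algebra.TensorProduct.tmul_mul_tmul, mul_one, β₁₃inv_mk]
    | add ζ ζ' h h' => simp only [map_add, h, h']
  refine LinearMap.congr_fun (f := H.β₁₃inv ∘ₗ H.β₁₃) (g := LinearMap.id) ?_
  refine Submodule.linearMap_qext _ (TensorProduct.ext' fun x η => ?_)
  change H.β₁₃inv (H.β₁₃ (πMix k A U s t (x ⊗ₜ η))) = πMix k A U s t (x ⊗ₜ η)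
  rw [β₁₃_mk, key, βinv_Δ, TOp.toTMix_mk, mulTail_πMix, Algebra.TensorProduct.tmul_mul_tmul,
    mul_one, ← Algebra.TensorProduct.one_def, one_mul]

theorem β₁₂inv_β₁₂ : Function.LeftInverse H.β₁₂inv H.β₁₂ := by
  have key (η : U ⊗[k] U) (ζ : T2 k A U s t) :
      H.β₁₂inv (mulTail η (T2.toT3 ζ)) = mulTail η (TOp.toTMid (H.βinv ζ)) := by
    induction ζ using T2.induction_on with
    | tmul p q =>
      rw [βinv_π2, TOp.toTMid_mulRightSnd, ← mulTail_mul, T2.toT3_mk, mulTail_π3,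
        Algebra.TensorProduct.tmul_mul_tmul, mul_one, β₁₂inv_mk]
    | add ζ ζ' h h' => simp only [map_add, h, h']
  refine LinearMap.congr_fun (f := H.β₁₂inv ∘ₗ H.β₁₂) (g := LinearMap.id) ?_
  refine Submodule.linearMap_qext _ (TensorProduct.ext' fun x η => ?_)
  change H.β₁₂inv (H.β₁₂ (πMid s t (x ⊗ₜ η))) = πMid s t (x ⊗ₜ η)
  rw [β₁₂_mk, key, βinv_Δ, TOp.toTMid_mk, mulTail_πMid, Algebra.TensorProduct.tmul_mul_tmul,
    mul_one, ← Algebra.TensorProduct.one_def, one_mul]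

theorem β₁₂_β₁₃_injective : Function.Injective (H.β₁₂ ∘ H.β₁₃) :=
  H.β₁₂inv_β₁₂.injective.comp H.β₁₃inv_β₁₃.injective

theorem β₁₂_mulTail_toTMid (η : U ⊗[k] U) (ξ : T2 k A U s t) :
    H.β₁₂ (mulTail η (T2.toTMid ξ)) = mulTail η (B.ΔL ξ) := by
  induction ξ using T2.induction_on with
  | tmul p q =>
    rw [B.ΔL_mk, ← mulTail_mul, T2.toTMid_mk, mulTail_πMid,
      Algebra.TensorProduct.tmul_mul_tmul, mul_one, β₁₂_mk]
  | add ξ ξ' h h' => simp only [map_add, h, h']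

theorem β₁₂_β₁₃_mk (x : U) (η : U ⊗[k] U) :
    H.β₁₂ (H.β₁₃ (πMix k A U s t (x ⊗ₜ η))) = mulTail η (B.ΔR (B.Δ x)) := by
  rw [β₁₃_mk, β₁₂_mulTail_toTMid, B.coassoc]

theorem ΔR_mulSnd {y : U} {ω : U ⊗[k] U} (hω : π2 k A U s t ω = B.Δ y) (ξ : T2 k A U s t) :
    B.ΔR (H.mulSnd y ξ) = mulTail ω (B.ΔR ξ) := by
  induction ξ using T2.induction_on with
  | tmul c d =>
    obtain ⟨ω', hω'⟩ := exists_π2_eq (B.Δ d)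
    rw [H.mulSnd_eq, B.ΔR_eq c (d * y) _ (B.Δ_mul_of_eq hω' hω).symm, B.ΔR_eq c d ω' hω']
    simp [Algebra.TensorProduct.tmul_mul_tmul]
  | add ξ ξ' h h' => simp only [map_add, h, h']

theorem β₁₂_β₁₃_comp_eq_ΔR_β (F : U →ₗ[k] T2 k A U s t →ₗ[k] TMix k A U s t)
    (hF : ∀ x p q : U,
      F x (π2 k A U s t (p ⊗ₜ[k] q)) = πMix k A U s t (x ⊗ₜ[k] (p ⊗ₜ[k] q)))
    (Ψ : TOp k A U t →ₗ[k] TMix k A U s t)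
    (hΨ : ∀ x y : U, Ψ (πOp k A U t (x ⊗ₜ[k] y)) = F x (B.Δ y)) (ξ : TOp k A U t) :
    H.β₁₂ (H.β₁₃ (Ψ ξ)) = B.ΔR (H.β ξ) := by
  induction ξ using TOp.induction_on with
  | tmul x y =>
    obtain ⟨ω, hω⟩ := exists_π2_eq (B.Δ y)
    have hFx : F x (π2 k A U s t ω) = πMix k A U s t (x ⊗ₜ ω) :=
      LinearMap.congr_fun (f := F x ∘ₗ π2 k A U s t) (g := πMix k A U s t ∘ₗ TensorProduct.mk k U _ x)
        (TensorProduct.ext' (hF x)) ω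
    rw [hΨ, ← hω, hFx, β₁₂_β₁₃_mk, H.β_eq, H.ΔR_mulSnd hω]
  | add ξ ξ' h h' => simp only [map_add, h, h']

theorem β₁₂_β₁₃_comp_eq_toT3_β (G : TOp k A U t →ₗ[k] U →ₗ[k] TMix k A U s t)
    (hG : ∀ p q y : U,
      G (πOp k A U t (p ⊗ₜ[k] q)) y = πMix k A U s t (p ⊗ₜ[k] (y ⊗ₜ[k] q)))
    (Φ : TOp k A U t →ₗ[k] TMix k A U s t)
    (hΦ : ∀ x y : U,
      Φ (πOp k A U t (x ⊗ₜ[k] y)) = G (H.βinv (π2 k A U s t (x ⊗ₜ[k] 1))) y)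
    (ξ : TOp k A U t) :
    H.β₁₂ (H.β₁₃ (Φ ξ)) = T2.toT3 (H.β ξ) := by
  have hG' (y : U) (ζ : TOp k A U t) :
      H.β₁₃ (G ζ y) = mulTail (y ⊗ₜ 1) (T2.toTMid (H.β ζ)) := by
    induction ζ using TOp.induction_on with
    | tmul p q =>
      rw [hG, β₁₃_mk, H.β_eq, toTMid_mulSnd, ← mulTail_mul]
      simp [Algebra.TensorProduct.tmul_mul_tmul]
    | add ζ ζ' h h' => simp only [map_add, LinearMap.add_apply, h, h']
  induction ξ using TOp.induction_on with
  | tmul x y =>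
    rw [hΦ, hG', β_βinv, T2.toTMid_mk, mulTail_πMid, Algebra.TensorProduct.tmul_mul_tmul,
      mul_one, Algebra.TensorProduct.tmul_mul_tmul, one_mul, mul_one, β₁₂_mk, H.β_eq,
      toT3_mulSnd]
  | add ξ ξ' h h' => simp only [map_add, h, h']

end LeftHopfAlgebroid

end HopfAlgebroid

theorem translation_coproduct_exchange
    (s t : A →ₗ[k] U)
    (B : LeftBialgebroid k A U s t) (H : LeftHopfAlgebroid k A U s t B)
    (F : U →ₗ[k] T2 k A U s t →ₗ[k] TMix k A U s t)
    (hF : ∀ x p q : U,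
      F x (π2 k A U s t (p ⊗ₜ[k] q)) = πMix k A U s t (x ⊗ₜ[k] (p ⊗ₜ[k] q)))
    (G : TOp k A U t →ₗ[k] U →ₗ[k] TMix k A U s t)
    (hG : ∀ p q y : U,
      G (πOp k A U t (p ⊗ₜ[k] q)) y = πMix k A U s t (p ⊗ₜ[k] (y ⊗ₜ[k] q)))
    (Ψ : TOp k A U t →ₗ[k] TMix k A U s t)
    (hΨ : ∀ x y : U, Ψ (πOp k A U t (x ⊗ₜ[k] y)) = F x (B.Δ y))
    (Φ : TOp k A U t →ₗ[k] TMix k A U s t)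
    (hΦ : ∀ x y : U,
      Φ (πOp k A U t (x ⊗ₜ[k] y)) = G (H.βinv (π2 k A U s t (x ⊗ₜ[k] 1))) y) :
    ∀ u : U,
      Ψ (H.βinv (π2 k A U s t (u ⊗ₜ[k] 1))) = Φ (H.βinv (π2 k A U s t (u ⊗ₜ[k] 1))) := by
  intro u
  apply H.β₁₂_β₁₃_injective
  simp only [Function.comp_apply]
  rw [H.β₁₂_β₁₃_comp_eq_ΔR_β F hF Ψ hΨ, H.β₁₂_β₁₃_comp_eq_toT3_β G hG Φ hΦ, H.β_βinv,
    B.ΔR_eq u 1 (1 ⊗ₜ 1) B.Δ_one.symm]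
  rfl

end Stmt18
end
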